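/- arXiv:2205.03903 — 5 statements merged into one kernel-verified Lean document; each statement's English description precedes it below -/
import Mathlib

section
/- For partitions alpha and beta of the same size with at most m parts, the Newton polytope of the Schur polynomial s_alpha in m variables is contained in the Newton polytope of s_beta if and only if beta dominates alpha (i.e., the partial sums of beta are at least those of alpha). -/
open Finset Pointwise

/-- The Young diagram of a partition with at most `m` parts given as an antitone map. -/
def diagramOf {m : ℕ} (lam : Fin m → ℕ) (h : Antitone lam) : YoungDiagram where
  cells := Finset.univ.biUnion fun i : Fin m =>
    (Finset.range (lam i)).image fun j => ((i : ℕ), j)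
  isLowerSet := by
    rintro ⟨i₁, j₁⟩ ⟨i₂, j₂⟩ ⟨hi, hj⟩ hm
    simp only [Finset.coe_biUnion, Finset.coe_univ, Set.mem_iUnion, Finset.mem_coe,
      Finset.mem_image, Finset.mem_range, Set.mem_univ, true_and, Set.iUnion_true] at hm ⊢
    obtain ⟨i, j, hj', hij⟩ := hm
    have hi1 : (i₁ : ℕ) = (i : ℕ) := ((Prod.mk.injEq _ _ _ _).mp hij).1.symm
    have hj1 : j₁ = j := ((Prod.mk.injEq _ _ _ _).mp hij).2.symm
    have hi2m : i₂ < m := lt_of_le_of_lt (le_of_le_of_eq hi hi1) i.isLt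
    refine ⟨⟨i₂, hi2m⟩, j₂, ?_, rfl⟩
    have : lam i ≤ lam ⟨i₂, hi2m⟩ := h (by simpa [Fin.le_def] using le_of_le_of_eq hi hi1)
    omega

/-- The content of a tableau: the number of cells with entry `e`. -/
def content (μ : YoungDiagram) (T : SemistandardYoungTableau μ) (e : ℕ) : ℕ :=
  (μ.cells.filter fun c => T c.1 c.2 = e).card

/-- The coefficient of `x^α` in the Schur polynomial `s_μ(x_1, …, x_m)`: the number of
semistandard Young tableaux of shape `μ` with entries in `{0, …, m-1}` and content `α`. -/
noncomputable def schurCoeff (m : ℕ) (μ : YoungDiagram) (α : Fin m → ℕ) : ℕ :=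
  Nat.card {T : SemistandardYoungTableau μ // (∀ i j : ℕ, (i, j) ∈ μ → T i j < m) ∧
    ∀ k : Fin m, content μ T (k : ℕ) = α k}

/-- The Schur polynomial, viewed as its coefficient function. -/
noncomputable def schurR (m : ℕ) (μ : YoungDiagram) : (Fin m → ℕ) → ℝ :=
  fun α => (schurCoeff m μ α : ℝ)

/-- The support of a polynomial (given by its coefficient function), as a set of points of `ℝ^m`. -/
def Supp {m : ℕ} (F : (Fin m → ℕ) → ℝ) : Set (Fin m → ℝ) :=
  {x | ∃ α : Fin m → ℕ, F α ≠ 0 ∧ x = fun i => (α i : ℝ)}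

/-- The Newton polytope of a polynomial. -/
def NewtonP {m : ℕ} (F : (Fin m → ℕ) → ℝ) : Set (Fin m → ℝ) :=
  convexHull ℝ (Supp F)

/-- A lattice point of `ℝ^m`. -/
def IsLattice {m : ℕ} (x : Fin m → ℝ) : Prop := ∀ i, ∃ z : ℤ, x i = z

/-- Saturated Newton polytope. -/
def HasSNP {m : ℕ} (F : (Fin m → ℕ) → ℝ) : Prop :=
  NewtonP F ∩ {x | IsLattice x} = Supp F

/-- Integer decomposition property of a subset of `ℝ^m`. -/
def HasIDP {m : ℕ} (P : Set (Fin m → ℝ)) : Prop :=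
  ∀ t : ℕ, 0 < t → ∀ p ∈ (t : ℝ) • P, IsLattice p →
    ∃ v : Fin t → (Fin m → ℝ), (∀ j, v j ∈ P ∧ IsLattice (v j)) ∧ p = ∑ j, v j

/-- `b` dominates `a`: every partial sum of `b` is at least that of `a`. -/
def Dominates {m : ℕ} (a b : Fin m → ℕ) : Prop :=
  ∀ j : Fin m, ∑ i ∈ Finset.univ.filter (· ≤ j), a i ≤ ∑ i ∈ Finset.univ.filter (· ≤ j), b i

/-- The `S_m`-orbit of a point of `ℕ^m`, as a subset of `ℝ^m`. -/
def orbitR {m : ℕ} (lam : Fin m → ℕ) : Set (Fin m → ℝ) :=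
  {x | ∃ σ : Equiv.Perm (Fin m), x = fun i => (lam (σ i) : ℝ)}

/-- Add a box to row `r`. -/
def AddBoxAt {m : ℕ} (ν : Fin m → ℕ) (r : Fin m) : Fin m → ℕ :=
  Function.update ν r (ν r + 1)

/-- `ν'` is obtained from `ν` by adding a box in the northmost row such that the result is
a partition that is at most `β`. -/
def NorthmostStep {m : ℕ} (β ν ν' : Fin m → ℕ) : Prop :=
  ∃ r : Fin m, ν' = AddBoxAt ν r ∧ Antitone ν' ∧ ν' ≤ β ∧
    ∀ r' : Fin m, r' < r → ¬ (Antitone (AddBoxAt ν r') ∧ AddBoxAt ν r' ≤ β)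

/-!
In a semistandard tableau of shape `λ`, the cells carrying letters from a set `S` meet each
column in at most `#S` cells, so there are at most `λ₀ + ⋯ + λ_{#S-1}` of them. Hence the support
of `s_β` lies in the half-spaces `x₀ + ⋯ + x_j ≤ β₀ + ⋯ + β_j`, while `α` lies in the support of
`s_α` (fill row `i` with `i`). Conversely, the content `γ` of a tableau of shape `α` is then
dominated by `α` after sorting, hence by `β`, and every such `γ` is the content of a tableau of
shape `β`: put the largest letter into the southernmost horizontal strip of the right size and
recurse on the remaining shape.
-/

structure IsSemistandard (n : ℕ) (μ : ℕ → ℕ) (T : ℕ → ℕ → ℕ) : Prop where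
  row_mono : ∀ {i j₁ j₂}, j₁ ≤ j₂ → j₂ < μ i → T i j₁ ≤ T i j₂
  col_strict : ∀ {i₁ i₂ j}, i₁ < i₂ → j < μ i₂ → T i₁ j < T i₂ j
  lt : ∀ {i j}, j < μ i → T i j < n

def fillingContent (μ : ℕ → ℕ) (N : ℕ) (T : ℕ → ℕ → ℕ) (k : ℕ) : ℕ :=
  ∑ i ∈ range N, #{j ∈ range (μ i) | T i j = k}

lemma sum_fillingContent (μ : ℕ → ℕ) (N : ℕ) (T : ℕ → ℕ → ℕ) (S : Finset ℕ) :
    ∑ k ∈ S, fillingContent μ N T k = ∑ i ∈ range N, #{j ∈ range (μ i) | T i j ∈ S} := by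
  simp only [fillingContent]
  rw [sum_comm]
  exact sum_congr rfl fun i _ => sum_card_fiberwise_eq_card_filter _ _ _

lemma IsSemistandard.sum_range_fillingContent {n N : ℕ} {μ : ℕ → ℕ} {T : ℕ → ℕ → ℕ}
    (hT : IsSemistandard n μ T) :
    ∑ k ∈ range n, fillingContent μ N T k = ∑ i ∈ range N, μ i := by
  rw [sum_fillingContent]
  refine sum_congr rfl fun i _ => ?_
  rw [filter_true_of_mem fun j hj => mem_range.2 (hT.lt (mem_range.1 hj)), card_range]

lemma IsSemistandard.fillingContent_eq_zero {n N k : ℕ} {μ : ℕ → ℕ} {T : ℕ → ℕ → ℕ}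
    (hT : IsSemistandard n μ T) (hk : n ≤ k) : fillingContent μ N T k = 0 :=
  sum_eq_zero fun _ _ => card_eq_zero.2 <| filter_eq_empty_iff.2 fun _ hj h =>
    (hT.lt (mem_range.1 hj)).not_ge (h ▸ hk)

lemma sum_card_rows_eq_sum_card_cols {μ : ℕ → ℕ} {M : ℕ} (hM : ∀ i, μ i ≤ M) (N : ℕ)
    (P : ℕ → ℕ → Prop) [∀ i j, Decidable (P i j)] :
    ∑ i ∈ range N, #{j ∈ range (μ i) | P i j} =
      ∑ j ∈ range M, #{i ∈ range N | j < μ i ∧ P i j} := by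
  have hrow : ∀ i, #{j ∈ range (μ i) | P i j} = #{j ∈ range M | j < μ i ∧ P i j} := fun i => by
    rw [← filter_filter, range_eq_Ico, range_eq_Ico, Ico_filter_lt, min_eq_right (hM i)]
  simp only [hrow, card_filter]
  exact sum_comm

lemma card_filter_lt_lt_card_filter_lt {A : Finset ℕ} {i i' : ℕ} (hi : i ∈ A) (hii' : i < i') :
    #{r ∈ A | r < i} < #{r ∈ A | r < i'} :=
  card_lt_card <| (ssubset_iff_of_subset fun r hr => by
    simp only [mem_filter] at hr ⊢; exact ⟨hr.1, hr.2.trans hii'⟩).2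
    ⟨i, mem_filter.2 ⟨hi, hii'⟩, by simp⟩

namespace IsSemistandard

variable {n : ℕ} {μ : ℕ → ℕ} {T : ℕ → ℕ → ℕ}

/-- Ranking the cells of column `j` with entries in `S` embeds them into the first `#S` rows. -/
lemma card_col_filter_le (hμ : Antitone μ) (hT : IsSemistandard n μ T) (N j : ℕ)
    (S : Finset ℕ) :
    #{i ∈ range N | j < μ i ∧ T i j ∈ S} ≤ #{i ∈ range #S | j < μ i} := by
  set A := {i ∈ range N | j < μ i ∧ T i j ∈ S}
  have hmono : StrictMonoOn (fun i => #{r ∈ A | r < i}) A := fun i hi i' _ hii' =>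
    card_filter_lt_lt_card_filter_lt hi hii'
  have hcard : #A ≤ #S := by
    refine card_le_card_of_injOn (fun i => T i j) (fun i hi => (mem_filter.1 hi).2.2) ?_
    refine StrictMonoOn.injOn fun i _ i' hi' hii' => hT.col_strict hii' (mem_filter.1 hi').2.1
  refine card_le_card_of_injOn _ (fun i hi => ?_) hmono.injOn
  have hrank_le : #{r ∈ A | r < i} ≤ i :=
    (card_le_card fun r hr => mem_range.2 (mem_filter.1 hr).2).trans (card_range i).le
  have hrank_lt : #{r ∈ A | r < i} < #A :=
    card_lt_card (filter_ssubset.2 ⟨i, hi, lt_irrefl i⟩)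
  simp only [coe_filter, Set.mem_ofPred_eq, mem_range]
  exact ⟨hrank_lt.trans_le hcard, (mem_filter.1 hi).2.1.trans_le (hμ hrank_le)⟩

lemma sum_fillingContent_le (hμ : Antitone μ) (hT : IsSemistandard n μ T) (N : ℕ)
    (S : Finset ℕ) : ∑ k ∈ S, fillingContent μ N T k ≤ ∑ i ∈ range #S, μ i := by
  have hM : ∀ i, μ i ≤ μ 0 := fun i => hμ (Nat.zero_le i)
  calc ∑ k ∈ S, fillingContent μ N T k
      = ∑ j ∈ range (μ 0), #{i ∈ range N | j < μ i ∧ T i j ∈ S} := by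
        rw [sum_fillingContent, sum_card_rows_eq_sum_card_cols hM]
    _ ≤ ∑ j ∈ range (μ 0), #{i ∈ range #S | j < μ i} :=
        sum_le_sum fun j _ => hT.card_col_filter_le hμ N j S
    _ = ∑ i ∈ range #S, μ i := by
        simpa using (sum_card_rows_eq_sum_card_cols hM #S fun _ _ => True).symm

end IsSemistandard

/-- Dominance of the decreasing rearrangement of `γ` by `μ`, phrased without sorting `γ`. -/
def SubsetDominated (γ μ : ℕ → ℕ) : Prop :=
  ∀ S : Finset ℕ, ∑ k ∈ S, γ k ≤ ∑ i ∈ range #S, μ i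

/-- The shape left after removing the southernmost horizontal strip of `R` cells from `μ`:
row `i` loses `min R (μ i) - min R (μ (i + 1))` cells. -/
def stripShape (μ : ℕ → ℕ) (R i : ℕ) : ℕ :=
  μ i - R + min R (μ (i + 1))

section stripShape

variable {μ : ℕ → ℕ} {R : ℕ}

lemma stripShape_le (hμ : Antitone μ) (i : ℕ) : stripShape μ R i ≤ μ i := by
  have := hμ (Nat.le_add_right i 1); simp only [stripShape]; omega

lemma le_stripShape (hμ : Antitone μ) (i : ℕ) : μ (i + 1) ≤ stripShape μ R i := by
  have := hμ (Nat.le_add_right i 1); simp only [stripShape]; omega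

lemma antitone_stripShape (hμ : Antitone μ) : Antitone (stripShape μ R) :=
  antitone_nat_of_succ_le fun i => (stripShape_le hμ (i + 1)).trans (le_stripShape hμ i)

lemma sum_range_stripShape_add (μ : ℕ → ℕ) (R N : ℕ) :
    ∑ i ∈ range N, stripShape μ R i + min R (μ 0) = ∑ i ∈ range N, μ i + min R (μ N) := by
  induction N with
  | zero => simp
  | succ N ih => simp only [sum_range_succ, stripShape] at ih ⊢; omega

lemma SubsetDominated.update_stripShape {γ : ℕ → ℕ} (hdom : SubsetDominated γ μ) (n : ℕ) :
    SubsetDominated (Function.update γ n 0) (stripShape μ (γ n)) := by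
  intro S
  set S' := S.erase n
  have hγμ : γ n ≤ μ 0 := by simpa using hdom {n}
  have hS : ∑ k ∈ S, Function.update γ n 0 k = ∑ k ∈ S', γ k := by
    rw [← sum_erase S (Function.update_self n 0 γ)]
    exact sum_congr rfl fun k hk => Function.update_of_ne (ne_of_mem_erase hk) _ _
  -- `min (γ n) (μ #S')` is `γ n` or `μ #S'`: use dominance for `S'`, resp. for `insert n S'`.
  have hstrip : ∑ k ∈ S', γ k + γ n ≤ ∑ i ∈ range #S', μ i + min (γ n) (μ #S') := by
    rw [← min_add_add_left, ← sum_range_succ]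
    refine le_min (Nat.add_le_add_right (hdom S') _) ?_
    simpa [S', sum_insert, card_insert_of_notMem, add_comm] using hdom (insert n S')
  have htel := sum_range_stripShape_add μ (γ n) #S'
  rw [min_eq_left hγμ] at htel
  calc ∑ k ∈ S, Function.update γ n 0 k
      ≤ ∑ i ∈ range #S', stripShape μ (γ n) i := by rw [hS]; omega
    _ ≤ ∑ i ∈ range #S, stripShape μ (γ n) i :=
        sum_le_sum_of_subset (range_subset_range.2 card_erase_le)

end stripShape

def fillStrip (ν : ℕ → ℕ) (n : ℕ) (T : ℕ → ℕ → ℕ) (i j : ℕ) : ℕ :=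
  if j < ν i then T i j else n

section fillStrip

variable {n : ℕ} {μ ν : ℕ → ℕ} {T : ℕ → ℕ → ℕ}

lemma IsSemistandard.fillStrip (hμ : Antitone μ) (hμν : ∀ i, μ (i + 1) ≤ ν i)
    (hT : IsSemistandard n ν T) :
    IsSemistandard (n + 1) μ (fillStrip ν n T) where
  row_mono {i j₁ j₂} h₁₂ h₂ := by
    unfold _root_.fillStrip
    by_cases h₂' : j₂ < ν i
    · rw [if_pos (h₁₂.trans_lt h₂'), if_pos h₂']
      exact hT.row_mono h₁₂ h₂'
    · rw [if_neg h₂']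
      split_ifs with h₁'
      exacts [(hT.lt h₁').le, le_rfl]
  col_strict {i₁ i₂ j} h₁₂ h₂ := by
    have h₁ : j < ν i₁ := h₂.trans_le ((hμ h₁₂).trans (hμν i₁))
    unfold _root_.fillStrip
    rw [if_pos h₁]
    split_ifs with h₂'
    · exact hT.col_strict h₁₂ h₂'
    · exact hT.lt h₁
  lt {i j} _ := by
    unfold _root_.fillStrip
    split_ifs with h
    · exact (hT.lt h).trans (Nat.lt_succ_self n)
    · exact Nat.lt_succ_self n

lemma fillingContent_fillStrip_self (hT : IsSemistandard n ν T) (N : ℕ) :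
    fillingContent μ N (fillStrip ν n T) n = ∑ i ∈ range N, (μ i - ν i) := by
  refine sum_congr rfl fun i _ => ?_
  rw [← Nat.card_Ico]
  congr 1
  ext j
  simp only [mem_filter, mem_range, mem_Ico]
  unfold fillStrip
  split_ifs with h
  · exact iff_of_false (fun h' => (hT.lt h).ne h'.2) (by omega)
  · omega

lemma fillingContent_fillStrip_of_ne (hνμ : ∀ i, ν i ≤ μ i) {k : ℕ} (hk : k ≠ n) (N : ℕ) :
    fillingContent μ N (fillStrip ν n T) k = fillingContent ν N T k := by
  refine sum_congr rfl fun i _ => congrArg card ?_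
  ext j
  simp only [mem_filter, mem_range]
  unfold fillStrip
  split_ifs with h
  · exact ⟨fun h' => ⟨h, h'.2⟩, fun h' => ⟨h.trans_le (hνμ i), h'.2⟩⟩
  · exact iff_of_false (fun h' => hk h'.2.symm) (fun h' => h h'.1)

end fillStrip

lemma fillingContent_succ_of_eq_zero {ν : ℕ → ℕ} {N : ℕ} (hν : ν N = 0) (T : ℕ → ℕ → ℕ)
    (k : ℕ) : fillingContent ν (N + 1) T k = fillingContent ν N T k := by
  simp [fillingContent, sum_range_succ, hν]

theorem exists_isSemistandard_of_subsetDominated (n : ℕ) :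
    ∀ μ γ : ℕ → ℕ, Antitone μ → (∀ i, n ≤ i → μ i = 0) → (∀ k, n ≤ k → γ k = 0) →
      SubsetDominated γ μ → ∑ k ∈ range n, γ k = ∑ i ∈ range n, μ i →
      ∃ T, IsSemistandard n μ T ∧ ∀ k, fillingContent μ n T k = γ k := by
  induction n with
  | zero =>
    intro μ γ _ hμ hγ _ _
    refine ⟨fun _ _ => 0, ⟨fun _ _ => le_rfl, fun _ h => ?_, fun h => ?_⟩, fun k => ?_⟩
    · simp [hμ _ (Nat.zero_le _)] at h
    · simp [hμ _ (Nat.zero_le _)] at h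
    · simp [fillingContent, hγ k (Nat.zero_le k)]
  | succ n ih =>
    intro μ γ hμ hμn hγn hdom hsum
    set ν := stripShape μ (γ n)
    have hγμ : γ n ≤ μ 0 := by simpa using hdom {n}
    have hμγ : μ n ≤ γ n := by
      have := hdom (range n)
      simp only [card_range, sum_range_succ] at this hsum
      omega
    have hνn : ν n = 0 := by simp only [ν, stripShape, hμn (n + 1) le_rfl]; omega
    have htel : ∑ i ∈ range (n + 1), ν i + γ n = ∑ i ∈ range (n + 1), μ i := by
      simpa [hμn (n + 1) le_rfl, min_eq_left hγμ] using sum_range_stripShape_add μ (γ n) (n + 1)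
    have hsum' : ∑ k ∈ range n, Function.update γ n 0 k = ∑ i ∈ range n, ν i := by
      rw [sum_congr rfl fun k hk => Function.update_of_ne (mem_range.1 hk).ne _ _]
      rw [sum_range_succ, hνn] at htel
      rw [sum_range_succ] at hsum
      omega
    obtain ⟨T, hT, hTγ⟩ := ih ν (Function.update γ n 0) (antitone_stripShape hμ)
      (fun i hi => Nat.eq_zero_of_le_zero (hνn ▸ antitone_stripShape hμ hi))
      (fun k hk => by
        rcases hk.eq_or_lt with rfl | hk
        · simp
        · simp [hk.ne', hγn k hk])
      (hdom.update_stripShape n) hsum'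
    refine ⟨fillStrip ν n T, hT.fillStrip hμ (le_stripShape hμ), fun k => ?_⟩
    rcases eq_or_ne k n with rfl | hk
    · rw [fillingContent_fillStrip_self hT,
        sum_tsub_distrib (g := ν) _ fun i _ => stripShape_le hμ i]
      omega
    · rw [fillingContent_fillStrip_of_ne (stripShape_le hμ) hk,
        fillingContent_succ_of_eq_zero hνn, hTγ, Function.update_of_ne hk]

def extendByZero {m : ℕ} (a : Fin m → ℕ) (i : ℕ) : ℕ :=
  if h : i < m then a ⟨i, h⟩ else 0

section extendByZero

variable {m : ℕ}

lemma extendByZero_of_lt (a : Fin m → ℕ) {i : ℕ} (h : i < m) : extendByZero a i = a ⟨i, h⟩ :=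
  dif_pos h

lemma extendByZero_of_le (a : Fin m → ℕ) {i : ℕ} (h : m ≤ i) : extendByZero a i = 0 :=
  dif_neg h.not_gt

lemma lt_of_lt_extendByZero {a : Fin m → ℕ} {i j : ℕ} (hj : j < extendByZero a i) : i < m := by
  by_contra hi
  rw [extendByZero_of_le a (not_lt.1 hi)] at hj
  exact Nat.not_lt_zero j hj

lemma antitone_extendByZero {a : Fin m → ℕ} (ha : Antitone a) : Antitone (extendByZero a) := by
  intro i i' hii'
  by_cases hi' : i' < m
  · rw [extendByZero_of_lt a hi', extendByZero_of_lt a (hii'.trans_lt hi')]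
    exact ha (Fin.mk_le_mk.2 hii')
  · rw [extendByZero_of_le a (not_lt.1 hi')]
    exact Nat.zero_le _

lemma sum_range_extendByZero (a : Fin m → ℕ) {t : ℕ} (ht : m ≤ t) :
    ∑ i ∈ range t, extendByZero a i = ∑ k, a k := by
  rw [← sum_subset (range_subset_range.2 ht) fun i _ hi =>
    extendByZero_of_le a (not_lt.1 (mem_range.not.1 hi)), ← Fin.sum_univ_eq_sum_range]
  exact sum_congr rfl fun k _ => extendByZero_of_lt a k.isLt

lemma sum_filter_le_eq_sum_range_extendByZero (a : Fin m → ℕ) (j : Fin m) :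
    ∑ i ∈ univ.filter (· ≤ j), a i = ∑ i ∈ range (j + 1), extendByZero a i := by
  have hmap : (univ.filter (· ≤ j)).map Fin.valEmbedding = range (j + 1) := by
    ext i
    simp only [mem_map, mem_filter, mem_univ, true_and, Fin.valEmbedding_apply, mem_range]
    exact ⟨fun ⟨k, hk, hki⟩ => hki ▸ Nat.lt_succ_of_le hk,
      fun hi => ⟨⟨i, by omega⟩, Fin.mk_le_of_le_val (Nat.le_of_lt_succ hi), rfl⟩⟩
  rw [← hmap, sum_map]
  exact sum_congr rfl fun k _ => (extendByZero_of_lt a k.isLt).symm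

lemma Dominates.sum_range_extendByZero_le {a b : Fin m → ℕ} (hdom : Dominates a b)
    (hsize : ∑ k, a k = ∑ k, b k) (t : ℕ) :
    ∑ i ∈ range t, extendByZero a i ≤ ∑ i ∈ range t, extendByZero b i := by
  rcases le_or_gt m t with hmt | htm
  · rw [sum_range_extendByZero a hmt, sum_range_extendByZero b hmt, hsize]
  · rcases t with _ | j
    · simp
    · simpa only [sum_filter_le_eq_sum_range_extendByZero] using hdom ⟨j, by omega⟩

end extendByZero

lemma SemistandardYoungTableau.finite_of_lt (μ : YoungDiagram) (m : ℕ) :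
    Finite {T : SemistandardYoungTableau μ // ∀ i j, (i, j) ∈ μ → T i j < m} := by
  refine Finite.of_injective (β := μ.cells → Fin m)
    (fun T c => ⟨T.1 c.1.1 c.1.2, T.2 _ _ ((YoungDiagram.mem_cells _).1 c.2)⟩) fun T T' hTT' => ?_
  refine Subtype.ext (SemistandardYoungTableau.ext fun i j => ?_)
  by_cases hij : (i, j) ∈ μ
  · exact congrArg Fin.val (congrFun hTT' ⟨(i, j), (YoungDiagram.mem_cells _).2 hij⟩)
  · rw [T.1.zeros hij, T'.1.zeros hij]

lemma schurR_ne_zero_iff (m : ℕ) (μ : YoungDiagram) (γ : Fin m → ℕ) :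
    schurR m μ γ ≠ 0 ↔ ∃ T : SemistandardYoungTableau μ,
      (∀ i j, (i, j) ∈ μ → T i j < m) ∧ ∀ k : Fin m, content μ T k = γ k := by
  have hfin := SemistandardYoungTableau.finite_of_lt μ m
  rw [schurR, Nat.cast_ne_zero, schurCoeff, Nat.card_ne_zero, nonempty_subtype]
  refine ⟨fun h => h.1, fun h => ⟨h, Finite.of_injective
    (fun T => (⟨T.1, T.2.1⟩ : {T : SemistandardYoungTableau μ // ∀ i j, (i, j) ∈ μ → T i j < m}))
    fun _ _ h => Subtype.ext (Subtype.mk.inj h)⟩⟩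

section diagramOf

variable {m : ℕ}

lemma mem_diagramOf_iff {lam : Fin m → ℕ} {h : Antitone lam} {i j : ℕ} :
    (i, j) ∈ diagramOf lam h ↔ j < extendByZero lam i := by
  rw [← YoungDiagram.mem_cells]
  simp only [diagramOf, mem_biUnion, mem_univ, true_and, mem_image, mem_range, Prod.mk.injEq]
  constructor
  · rintro ⟨k, j', hj', rfl, rfl⟩
    rwa [extendByZero_of_lt lam k.isLt]
  · intro hj
    have hi := lt_of_lt_extendByZero hj
    exact ⟨⟨i, hi⟩, j, by rwa [← extendByZero_of_lt lam hi], rfl, rfl⟩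

lemma content_diagramOf (lam : Fin m → ℕ) (h : Antitone lam)
    (T : SemistandardYoungTableau (diagramOf lam h)) (k : ℕ) :
    content (diagramOf lam h) T k = fillingContent (extendByZero lam) m T k := by
  have hrow_inj (i : ℕ) : Function.Injective fun j : ℕ => (i, j) := fun _ _ => congrArg Prod.snd
  have hdisj : ((univ : Finset (Fin m)) : Set (Fin m)).PairwiseDisjoint fun i : Fin m =>
      ((range (lam i)).image fun j => ((i : ℕ), j)).filter fun c => T c.1 c.2 = k := by
    intro i _ i' _ hii'
    simp only [Function.onFun, disjoint_left, mem_filter, mem_image]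
    rintro _ ⟨⟨j, _, rfl⟩, _⟩ ⟨⟨j', _, hj'⟩, _⟩
    exact hii' (Fin.ext (congrArg Prod.fst hj').symm)
  have hcells : (diagramOf lam h).cells =
      univ.biUnion fun i : Fin m => (range (lam i)).image fun j => ((i : ℕ), j) := rfl
  rw [content, hcells, filter_biUnion, card_biUnion hdisj, fillingContent,
    ← Fin.sum_univ_eq_sum_range]
  refine sum_congr rfl fun i _ => ?_
  rw [filter_image, card_image_of_injective _ (hrow_inj i), extendByZero_of_lt lam i.isLt]

lemma schurR_diagramOf_ne_zero_iff (lam : Fin m → ℕ) (h : Antitone lam) (γ : Fin m → ℕ) :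
    schurR m (diagramOf lam h) γ ≠ 0 ↔ ∃ T, IsSemistandard m (extendByZero lam) T ∧
      ∀ k, fillingContent (extendByZero lam) m T k = extendByZero γ k := by
  rw [schurR_ne_zero_iff]
  constructor
  · rintro ⟨T, hTm, hTγ⟩
    have hT : IsSemistandard m (extendByZero lam) T :=
      { row_mono := fun h₁₂ h₂ => T.row_weak_of_le h₁₂ (mem_diagramOf_iff.2 h₂)
        col_strict := fun h₁₂ h₂ => T.col_strict h₁₂ (mem_diagramOf_iff.2 h₂)
        lt := fun h => hTm _ _ (mem_diagramOf_iff.2 h) }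
    refine ⟨T, hT, fun k => ?_⟩
    rcases lt_or_ge k m with hk | hk
    · rw [← content_diagramOf, extendByZero_of_lt γ hk, ← hTγ ⟨k, hk⟩]
    · rw [hT.fillingContent_eq_zero hk, extendByZero_of_le γ hk]
  · rintro ⟨T, hT, hTγ⟩
    let T' : SemistandardYoungTableau (diagramOf lam h) :=
      { entry i j := if j < extendByZero lam i then T i j else 0
        row_weak' := fun h₁₂ h₂ => by
          have h₂ := mem_diagramOf_iff.1 h₂
          simp only [if_pos h₂, if_pos (h₁₂.trans h₂)]
          exact hT.row_mono h₁₂.le h₂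
        col_strict' := fun h₁₂ h₂ => by
          have h₂ := mem_diagramOf_iff.1 h₂
          have h₁ := h₂.trans_le (antitone_extendByZero h h₁₂.le)
          simp only [if_pos h₁, if_pos h₂]
          exact hT.col_strict h₁₂ h₂
        zeros' := fun h₀ => if_neg (mem_diagramOf_iff.not.1 h₀) }
    have hT'T : ∀ i j, j < extendByZero lam i → T' i j = T i j := fun i j hj => if_pos hj
    refine ⟨T', fun i j hij => ?_, fun k => ?_⟩
    · have hij := mem_diagramOf_iff.1 hij
      rw [hT'T i j hij]
      exact hT.lt hij
    · rw [content_diagramOf, ← extendByZero_of_lt γ k.isLt, ← hTγ]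
      refine sum_congr rfl fun i _ => congrArg card (filter_congr fun j hj => ?_)
      rw [hT'T i j (mem_range.1 hj)]

lemma schurR_diagramOf_self_ne_zero (lam : Fin m → ℕ) (h : Antitone lam) :
    schurR m (diagramOf lam h) lam ≠ 0 := by
  refine (schurR_diagramOf_ne_zero_iff lam h lam).2
    ⟨fun i _ => i, ⟨fun _ _ => le_rfl, fun h₁₂ _ => h₁₂, lt_of_lt_extendByZero⟩, fun k => ?_⟩
  have hrow (i : ℕ) : #{j ∈ range (extendByZero lam i) | i = k} =
      if i = k then extendByZero lam i else 0 := by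
    split_ifs with hik <;> simp [hik]
  rw [fillingContent, sum_congr rfl fun i _ => hrow i, sum_ite_eq']
  split_ifs with hk
  · rfl
  · rw [extendByZero_of_le lam (not_lt.1 (mem_range.not.1 hk))]

lemma newtonP_schurR_diagramOf_subset (β : Fin m → ℕ) (hβ : Antitone β) (j : Fin m) :
    NewtonP (schurR m (diagramOf β hβ)) ⊆
      {x | ∑ i ∈ univ.filter (· ≤ j), x i ≤ ((∑ i ∈ univ.filter (· ≤ j), β i : ℕ) : ℝ)} := by
  refine convexHull_min ?_ <|
    convex_halfSpace_le ⟨fun x y => sum_add_distrib, fun c x => (mul_sum _ _ _).symm⟩ _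
  rintro _ ⟨γ, hγ, rfl⟩
  obtain ⟨T, hT, hTγ⟩ := (schurR_diagramOf_ne_zero_iff β hβ γ).1 hγ
  have key := hT.sum_fillingContent_le (antitone_extendByZero hβ) m (range (j + 1))
  simp only [hTγ, card_range, ← sum_filter_le_eq_sum_range_extendByZero] at key
  show ∑ i ∈ univ.filter (· ≤ j), (γ i : ℝ) ≤ _
  exact_mod_cast key

lemma schurR_diagramOf_ne_zero_of_dominates {α β : Fin m → ℕ} (hα : Antitone α)
    (hβ : Antitone β) (hsize : ∑ k, α k = ∑ k, β k) (hdom : Dominates α β) {γ : Fin m → ℕ}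
    (hγ : schurR m (diagramOf α hα) γ ≠ 0) : schurR m (diagramOf β hβ) γ ≠ 0 := by
  obtain ⟨T, hT, hTγ⟩ := (schurR_diagramOf_ne_zero_iff α hα γ).1 hγ
  refine (schurR_diagramOf_ne_zero_iff β hβ γ).2 <|
    exists_isSemistandard_of_subsetDominated m _ _ (antitone_extendByZero hβ)
      (fun _ => extendByZero_of_le β) (fun _ => extendByZero_of_le γ) (fun S => ?_) ?_
  · calc ∑ k ∈ S, extendByZero γ k = ∑ k ∈ S, fillingContent (extendByZero α) m T k := by
          simp only [hTγ]
      _ ≤ ∑ i ∈ range #S, extendByZero α i :=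
          hT.sum_fillingContent_le (antitone_extendByZero hα) m S
      _ ≤ ∑ i ∈ range #S, extendByZero β i := hdom.sum_range_extendByZero_le hsize #S
  · simp only [← hTγ, hT.sum_range_fillingContent, sum_range_extendByZero _ le_rfl, hsize]

end diagramOf

/-- **Rado's theorem.** For partitions `α, β` of the same size with at most `m` parts,
`Newton(s_α) ⊆ Newton(s_β)` iff `β` dominates `α`. -/
theorem newton_schur_subset_iff_dominates (m : ℕ) (α β : Fin m → ℕ)
    (hα : Antitone α) (hβ : Antitone β) (hsize : ∑ k, α k = ∑ k, β k) :
    NewtonP (schurR m (diagramOf α hα)) ⊆ NewtonP (schurR m (diagramOf β hβ)) ↔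
      Dominates α β := by
  constructor
  · intro hsub j
    have hα_mem : (fun i => (α i : ℝ)) ∈ NewtonP (schurR m (diagramOf β hβ)) :=
      hsub (subset_convexHull ℝ _ ⟨α, schurR_diagramOf_self_ne_zero α hα, rfl⟩)
    have key : ∑ i ∈ univ.filter (· ≤ j), (α i : ℝ) ≤ ((∑ i ∈ univ.filter (· ≤ j), β i : ℕ) : ℝ) :=
      newtonP_schurR_diagramOf_subset β hβ j hα_mem
    exact_mod_cast key
  · intro hdom
    exact convexHull_mono fun _ ⟨γ, hγ, hx⟩ =>
      ⟨γ, schurR_diagramOf_ne_zero_of_dominates hα hβ hsize hdom hγ, hx⟩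
end

section
/- Let F be a linear combination of Schur polynomials in m variables satisfying: (a) for each degree d, the support of the sum of terms of degree d equals the union of the supports of the Schur polynomials appearing in that degree, and (b) in each degree the partitions appearing have a unique dominance-maximum, and these maxima form a chain alpha = lambda^0 < lambda^1 < ... < lambda^l = beta where each lambda^i is obtained from lambda^{i-1} by adding one box in the northmost possible row. Then F has saturated Newton polytope. -/
open Finset Pointwise

/-!
By Rado's theorem the support of `s_ν` consists of the lattice points of the permutahedron of `ν`,
cut out by `∑_{q ∈ S} α_q ≤ ν_1 + ⋯ + ν_{|S|}`. With condition (a) and the dominance maxima this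
makes the support of `F` the union of the permutahedra of the chain `lam 0, …, lam l`. A lattice
point of the Newton polytope has total degree `|lam 0| + i` for some `i ≤ l`. Adding each box in
the northmost possible row makes the rows of the added boxes weakly descend, so every partial sum
`λ_1 + ⋯ + λ_k` is concave along the chain; averaging a supporting line of it over a convex
combination shows that the point satisfies the Rado inequalities of `lam i`.
-/

namespace YoungDiagram

def ofAntitone (f : ℕ → ℕ) (hf : Antitone f) (n : ℕ) : YoungDiagram where
  cells := (range n ×ˢ range (f 0)).filter fun c => c.2 < f c.1
  isLowerSet := by
    rintro ⟨i₁, j₁⟩ ⟨i₂, j₂⟩ ⟨hi, hj⟩ h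
    simp only [coe_filter, mem_product, mem_range, Set.mem_ofPred_eq] at h hi hj ⊢
    have := hf hi
    have := hf (Nat.zero_le i₂)
    omega

theorem mem_ofAntitone {f : ℕ → ℕ} {hf : Antitone f} {n : ℕ} (hn : ∀ i, n ≤ i → f i = 0)
    {i j : ℕ} : (i, j) ∈ ofAntitone f hf n ↔ j < f i := by
  rw [← mem_cells]
  simp only [ofAntitone, mem_filter, mem_product, mem_range]
  have := hf (Nat.zero_le i)
  have := hn i
  constructor
  · exact fun h => h.2
  · intro h
    refine ⟨⟨?_, by omega⟩, h⟩
    by_contra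
    omega

theorem rowLen_ofAntitone {f : ℕ → ℕ} {hf : Antitone f} {n : ℕ} (hn : ∀ i, n ≤ i → f i = 0)
    (i : ℕ) : (ofAntitone f hf n).rowLen i = f i :=
  eq_of_forall_lt_iff fun _ => mem_iff_lt_rowLen.symm.trans (mem_ofAntitone hn)

theorem card_cells_filter_fst_lt (μ : YoungDiagram) (k : ℕ) :
    #{c ∈ μ.cells | c.1 < k} = ∑ r ∈ range k, μ.rowLen r := by
  rw [card_eq_sum_card_fiberwise (f := Prod.fst) (t := range k)
    fun c hc => mem_range.mpr (mem_filter.mp hc).2]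
  refine sum_congr rfl fun r hr => ?_
  rw [rowLen_eq_card, row, filter_filter]
  congr 1
  exact filter_congr fun c _ => by rw [mem_range] at hr; constructor <;> intro h <;> omega

theorem card_cells_ofAntitone {f : ℕ → ℕ} {hf : Antitone f} {n : ℕ}
    (hn : ∀ i, n ≤ i → f i = 0) : #(ofAntitone f hf n).cells = ∑ i ∈ range n, f i := by
  have hrows : ∀ c ∈ (ofAntitone f hf n).cells, c.1 < n := fun c hc =>
    (mem_product.mp (mem_filter.mp hc).1).1 |> mem_range.mp
  rw [← filter_true_of_mem hrows, card_cells_filter_fst_lt]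
  exact sum_congr rfl fun i _ => rowLen_ofAntitone hn i

theorem card_cells_filter_fst_lt_snd_eq (μ : YoungDiagram) (k j : ℕ) :
    #{c ∈ μ.cells | c.1 < k ∧ c.2 = j} = min k (μ.colLen j) := by
  have : {c ∈ μ.cells | c.1 < k ∧ c.2 = j} = range (min k (μ.colLen j)) ×ˢ {j} := by
    ext ⟨a, b⟩
    simp only [mem_filter, mem_cells, mem_product, mem_range, mem_singleton, lt_min_iff,
      mem_iff_lt_colLen]
    constructor
    · rintro ⟨h, hk, rfl⟩
      exact ⟨⟨hk, h⟩, rfl⟩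
    · rintro ⟨⟨hk, h⟩, rfl⟩
      exact ⟨h, hk, rfl⟩
  rw [this, card_product, card_range, card_singleton, mul_one]

end YoungDiagram

namespace SemistandardYoungTableau

variable {μ : YoungDiagram} (T : SemistandardYoungTableau μ)

theorem sum_content (S : Finset ℕ) :
    ∑ e ∈ S, content μ T e = #{c ∈ μ.cells | T c.1 c.2 ∈ S} :=
  sum_card_fiberwise_eq_card_filter _ _ _

theorem card_filter_mem_snd_eq_le (S : Finset ℕ) (j : ℕ) :
    #{c ∈ μ.cells | T c.1 c.2 ∈ S ∧ c.2 = j} ≤ min #S (μ.colLen j) := by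
  refine le_min (card_le_card_of_injOn (fun c => T c.1 c.2)
    (fun c hc => (mem_filter.mp hc).2.1) ?_) ?_
  · rintro ⟨a₁, b₁⟩ h₁ ⟨a₂, b₂⟩ h₂ he
    simp only [coe_filter, Set.mem_ofPred_eq, YoungDiagram.mem_cells] at h₁ h₂ he
    obtain ⟨hm₁, -, rfl⟩ := h₁
    obtain ⟨hm₂, -, rfl⟩ := h₂
    rcases lt_trichotomy a₁ a₂ with h | rfl | h
    · exact absurd he (T.col_strict h hm₂).ne
    · rfl
    · exact absurd he (T.col_strict h hm₁).ne'
  · rw [μ.colLen_eq_card]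
    exact card_le_card fun c hc => by
      rw [mem_filter] at hc
      exact YoungDiagram.mem_col_iff.mpr ⟨hc.1, hc.2.2⟩

/-- Column strictness: each column holds at most `#S` entries from `S`, which is the number of
its cells in the top `#S` rows. -/
theorem sum_content_le_sum_rowLen (S : Finset ℕ) :
    ∑ e ∈ S, content μ T e ≤ ∑ r ∈ range #S, μ.rowLen r := by
  have hcol : ∀ p : ℕ × ℕ → Prop, ∀ [DecidablePred p],
      Set.MapsTo Prod.snd (({c ∈ μ.cells | p c} : Finset _) : Set (ℕ × ℕ))
        (range (μ.rowLen 0) : Set ℕ) := by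
    rintro p _ ⟨a, b⟩ hc
    have := YoungDiagram.mem_iff_lt_rowLen.mp (mem_filter.mp hc).1
    exact mem_range.mpr (this.trans_le (μ.rowLen_anti 0 a a.zero_le))
  rw [sum_content, ← μ.card_cells_filter_fst_lt, card_eq_sum_card_fiberwise (hcol _),
    card_eq_sum_card_fiberwise (hcol _)]
  refine sum_le_sum fun j _ => ?_
  rw [filter_filter, filter_filter, μ.card_cells_filter_fst_lt_snd_eq]
  exact T.card_filter_mem_snd_eq_le S j

/-- `hstrip` says that the cells of `D` outside `D'` form a horizontal strip. -/
def extendByStrip {D' D : YoungDiagram} (T : SemistandardYoungTableau D') {m : ℕ}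
    (hT : ∀ i j, (i, j) ∈ D' → T i j < m) (hsub : D' ≤ D)
    (hstrip : ∀ i₁ i₂ j, i₁ < i₂ → (i₂, j) ∈ D → (i₁, j) ∈ D') :
    SemistandardYoungTableau D where
  entry i j := if (i, j) ∈ D' then T i j else if (i, j) ∈ D then m else 0
  row_weak' {i j₁ j₂} hj h := by
    have hD : (i, j₁) ∈ D := D.up_left_mem le_rfl hj.le h
    by_cases h₂ : (i, j₂) ∈ D'
    · simp only [D'.up_left_mem le_rfl hj.le h₂, h₂, if_true]
      exact T.row_weak hj h₂
    · by_cases h₁ : (i, j₁) ∈ D'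
      · simp only [h₁, h₂, h, if_true, if_false]
        exact (hT i j₁ h₁).le
      · simp only [h₁, h₂, h, hD, if_true, if_false, le_rfl]
  col_strict' {i₁ i₂ j} hi h := by
    have h₁ := hstrip i₁ i₂ j hi h
    by_cases h₂ : (i₂, j) ∈ D'
    · simp only [h₁, h₂, if_true]
      exact T.col_strict hi h₂
    · simp only [h₁, h₂, h, if_true, if_false]
      exact hT i₁ j h₁
  zeros' {i j} h := by
    have h' : (i, j) ∉ D' := fun h' => h (hsub h')
    simp only [h, h', if_false]

section extendByStrip

variable {D' D : YoungDiagram} {T : SemistandardYoungTableau D'} {m : ℕ}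
  {hT : ∀ i j, (i, j) ∈ D' → T i j < m} {hsub : D' ≤ D}
  {hstrip : ∀ i₁ i₂ j, i₁ < i₂ → (i₂, j) ∈ D → (i₁, j) ∈ D'}

theorem extendByStrip_apply (i j : ℕ) : extendByStrip T hT hsub hstrip i j =
    if (i, j) ∈ D' then T i j else if (i, j) ∈ D then m else 0 :=
  rfl

theorem extendByStrip_lt {i j : ℕ} (h : (i, j) ∈ D) :
    extendByStrip T hT hsub hstrip i j < m + 1 := by
  rw [extendByStrip_apply]
  split_ifs with h'
  · exact (hT i j h').trans (Nat.lt_succ_self m)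
  · exact Nat.lt_succ_self m

theorem content_extendByStrip_of_ne {e : ℕ} (he : e ≠ m) :
    content D (extendByStrip T hT hsub hstrip) e = content D' T e := by
  unfold content
  congr 1
  ext ⟨i, j⟩
  rw [mem_filter, mem_filter, YoungDiagram.mem_cells, YoungDiagram.mem_cells, extendByStrip_apply]
  by_cases h' : (i, j) ∈ D'
  · simp [h', hsub h']
  · by_cases h : (i, j) ∈ D <;> simp [h, h', Ne.symm he]

theorem content_extendByStrip_self :
    content D (extendByStrip T hT hsub hstrip) m = #D.cells - #D'.cells := by
  unfold content
  rw [← card_sdiff_of_subset (YoungDiagram.cells_subset_iff.mpr hsub)]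
  congr 1
  ext ⟨i, j⟩
  rw [mem_filter, mem_sdiff, YoungDiagram.mem_cells, YoungDiagram.mem_cells, extendByStrip_apply]
  by_cases h' : (i, j) ∈ D'
  · simp [h', (hT i j h').ne]
  · by_cases h : (i, j) ∈ D <;> simp [h, h']

end extendByStrip

end SemistandardYoungTableau

/-- The row lengths `f` with a horizontal strip of `min x (f 0)` boxes removed: row `j` loses
`min x (f j) - min x (f (j + 1))` boxes. -/
def removeStrip (f : ℕ → ℕ) (x j : ℕ) : ℕ := f j - min x (f j) + min x (f (j + 1))

section removeStrip

variable {f : ℕ → ℕ}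

theorem removeStrip_le (hf : Antitone f) (x j : ℕ) : removeStrip f x j ≤ f j := by
  have := hf (Nat.le_add_right j 1)
  unfold removeStrip
  omega

theorem le_removeStrip (hf : Antitone f) (x j : ℕ) : f (j + 1) ≤ removeStrip f x j := by
  have := hf (Nat.le_add_right j 1)
  unfold removeStrip
  omega

theorem antitone_removeStrip (hf : Antitone f) (x : ℕ) : Antitone (removeStrip f x) :=
  antitone_nat_of_succ_le fun j => (removeStrip_le hf x (j + 1)).trans (le_removeStrip hf x j)

theorem removeStrip_eq_zero (hf : Antitone f) {x m : ℕ} (hf0 : ∀ i, m + 1 ≤ i → f i = 0)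
    (hx : f m ≤ x) {i : ℕ} (hi : m ≤ i) : removeStrip f x i = 0 := by
  have := hf hi
  have := hf0 (i + 1) (by omega)
  unfold removeStrip
  omega

theorem horizontalStrip_removeStrip (hf : Antitone f) {x m : ℕ} (hf0 : ∀ i, m + 1 ≤ i → f i = 0)
    (hx : f m ≤ x) :
    YoungDiagram.ofAntitone _ (antitone_removeStrip hf x) m ≤
        YoungDiagram.ofAntitone f hf (m + 1) ∧
      ∀ i₁ i₂ j, i₁ < i₂ → (i₂, j) ∈ YoungDiagram.ofAntitone f hf (m + 1) →
        (i₁, j) ∈ YoungDiagram.ofAntitone _ (antitone_removeStrip hf x) m := by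
  have hg0 : ∀ i, m ≤ i → removeStrip f x i = 0 := fun i hi => removeStrip_eq_zero hf hf0 hx hi
  refine ⟨fun ⟨i, j⟩ h => ?_, fun i₁ i₂ j hi h => ?_⟩
  · rw [YoungDiagram.mem_ofAntitone hg0] at h
    rw [YoungDiagram.mem_ofAntitone hf0]
    exact h.trans_le (removeStrip_le hf x i)
  · rw [YoungDiagram.mem_ofAntitone hf0] at h
    rw [YoungDiagram.mem_ofAntitone hg0]
    exact h.trans_le ((hf hi).trans (le_removeStrip hf x i₁))

theorem sum_range_removeStrip {x : ℕ} (hx : x ≤ f 0) (k : ℕ) :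
    ∑ r ∈ range k, removeStrip f x r + x = ∑ r ∈ range k, f r + min x (f k) := by
  induction k with
  | zero => simp [hx]
  | succ k ih =>
    rw [sum_range_succ, sum_range_succ]
    unfold removeStrip at ih ⊢
    omega

theorem sum_update_le_sum_removeStrip {α : ℕ → ℕ}
    (hdom : ∀ S : Finset ℕ, ∑ i ∈ S, α i ≤ ∑ r ∈ range #S, f r) (m : ℕ) (S : Finset ℕ) :
    ∑ i ∈ S, Function.update α m 0 i ≤ ∑ r ∈ range #S, removeStrip f (α m) r := by
  have hx : α m ≤ f 0 := by simpa using hdom {m}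
  have hm : m ∉ S.erase m := notMem_erase m S
  have hS : ∑ i ∈ S, Function.update α m 0 i = ∑ i ∈ S.erase m, α i := by
    rw [← sum_erase S (f := Function.update α m 0) (Function.update_self _ _ _)]
    exact sum_congr rfl fun i hi => Function.update_of_ne (ne_of_mem_erase hi) _ _
  have hmono : ∑ r ∈ range #(S.erase m), removeStrip f (α m) r ≤
      ∑ r ∈ range #S, removeStrip f (α m) r :=
    sum_le_sum_of_subset (range_subset_range.mpr (card_erase_le))
  have hk := sum_range_removeStrip hx #(S.erase m)
  have hd := hdom (S.erase m)
  have hd' := hdom (insert m (S.erase m))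
  rw [sum_insert hm, card_insert_of_notMem hm, sum_range_succ] at hd'
  omega

end removeStrip

/-- The largest letter fills a horizontal strip removed greedily (`removeStrip`), and induction
fills the rest. -/
theorem exists_ssyt_content (m : ℕ) (f : ℕ → ℕ) (hf : Antitone f) (hf0 : ∀ i, m ≤ i → f i = 0)
    (α : ℕ → ℕ) (hα : ∀ i, m ≤ i → α i = 0)
    (hdom : ∀ S : Finset ℕ, ∑ i ∈ S, α i ≤ ∑ r ∈ range #S, f r)
    (hsum : ∑ i ∈ range m, α i = ∑ i ∈ range m, f i) :
    ∃ T : SemistandardYoungTableau (YoungDiagram.ofAntitone f hf m),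
      (∀ i j, (i, j) ∈ YoungDiagram.ofAntitone f hf m → T i j < m) ∧
        ∀ e, content _ T e = α e := by
  open YoungDiagram SemistandardYoungTableau in
  induction m generalizing f α with
  | zero =>
    have hempty : ∀ i j, (i, j) ∉ ofAntitone f hf 0 := fun i j h => by
      have := (mem_ofAntitone hf0).mp h
      rw [hf0 i i.zero_le] at this
      exact Nat.not_lt_zero _ this
    refine ⟨default, fun i j h => absurd h (hempty i j), fun e => ?_⟩
    rw [hα e e.zero_le]
    exact card_eq_zero.mpr (filter_eq_empty_iff.mpr fun c hc => absurd hc (hempty c.1 c.2))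
  | succ m ih =>
    rw [sum_range_succ, sum_range_succ] at hsum
    have hxm : f m ≤ α m := by
      have := hdom (range m)
      rw [card_range] at this
      omega
    have hx0 : α m ≤ f 0 := by simpa using hdom {m}
    have hg0 : ∀ i, m ≤ i → removeStrip f (α m) i = 0 := fun i hi =>
      removeStrip_eq_zero hf hf0 hxm hi
    have hsum_strip := sum_range_removeStrip hx0 m
    rw [min_eq_right hxm] at hsum_strip
    have hupdate : ∀ i, i ≠ m → Function.update α m 0 i = α i := fun i hi =>
      Function.update_of_ne hi _ _
    obtain ⟨T, hT, hTc⟩ := ih (removeStrip f (α m)) (antitone_removeStrip hf (α m)) hg0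
      (Function.update α m 0)
      (fun i hi => by
        rcases hi.eq_or_lt with rfl | hi
        · exact Function.update_self _ _ _
        · rw [hupdate i hi.ne']; exact hα i hi)
      (sum_update_le_sum_removeStrip hdom m)
      (by
        have : ∑ i ∈ range m, Function.update α m 0 i = ∑ i ∈ range m, α i :=
          sum_congr rfl fun i hi => hupdate i (mem_range.mp hi).ne
        omega)
    obtain ⟨hsub, hstrip⟩ := horizontalStrip_removeStrip hf hf0 hxm
    refine ⟨extendByStrip T hT hsub hstrip, fun i j h => extendByStrip_lt h, fun e => ?_⟩
    rcases eq_or_ne e m with he | he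
    · rw [he, content_extendByStrip_self, card_cells_ofAntitone hf0, card_cells_ofAntitone hg0,
        sum_range_succ]
      omega
    · rw [content_extendByStrip_of_ne he, hTc, hupdate e he]

section Permutahedron

variable {m : ℕ}

def padZero (ν : Fin m → ℕ) (i : ℕ) : ℕ := if h : i < m then ν ⟨i, h⟩ else 0

theorem padZero_val (ν : Fin m → ℕ) (k : Fin m) : padZero ν k = ν k :=
  dif_pos k.isLt

theorem padZero_of_le (ν : Fin m → ℕ) {i : ℕ} (hi : m ≤ i) : padZero ν i = 0 :=
  dif_neg hi.not_gt

theorem antitone_padZero {ν : Fin m → ℕ} (hν : Antitone ν) : Antitone (padZero ν) := by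
  intro i j hij
  unfold padZero
  split_ifs with hj hi hi
  · exact hν (Fin.le_def.mpr hij)
  · omega
  · exact Nat.zero_le _
  · exact le_rfl

theorem diagramOf_eq_ofAntitone {ν : Fin m → ℕ} (hν : Antitone ν) :
    diagramOf ν hν = YoungDiagram.ofAntitone (padZero ν) (antitone_padZero hν) m := by
  ext ⟨i, j⟩
  change (i, j) ∈ (diagramOf ν hν).cells ↔ (i, j) ∈ YoungDiagram.ofAntitone _ _ m
  rw [YoungDiagram.mem_ofAntitone fun i => padZero_of_le ν]
  simp only [diagramOf, mem_biUnion, mem_univ, mem_image, mem_range, Prod.mk.injEq, true_and]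
  constructor
  · rintro ⟨k, j, hj, rfl, rfl⟩
    rwa [padZero_val]
  · intro h
    have hi : i < m := by
      by_contra hi
      rw [padZero_of_le ν (not_lt.mp hi)] at h
      exact Nat.not_lt_zero _ h
    exact ⟨⟨i, hi⟩, j, by rwa [← padZero_val ν ⟨i, hi⟩], rfl, rfl⟩

def topSum (ν : Fin m → ℕ) (k : ℕ) : ℕ := ∑ r ∈ range k, padZero ν r

theorem topSum_eq_sum_filter (ν : Fin m → ℕ) (k : ℕ) :
    topSum ν k = ∑ t ∈ univ.filter fun t : Fin m => (t : ℕ) < k, ν t := by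
  have hpre : (range k).preimage Fin.val Fin.val_injective.injOn =
      univ.filter fun t : Fin m => (t : ℕ) < k := by
    ext t
    simp
  rw [topSum, ← sum_preimage Fin.val (range k) Fin.val_injective.injOn (padZero ν)
    fun i _ hi => padZero_of_le ν (not_lt.mp fun h => hi ⟨⟨i, h⟩, rfl⟩), hpre]
  exact sum_congr rfl fun t _ => padZero_val ν t

theorem topSum_of_le (ν : Fin m → ℕ) {k : ℕ} (hk : m ≤ k) : topSum ν k = ∑ t, ν t := by
  rw [topSum_eq_sum_filter, filter_true_of_mem fun t _ => t.isLt.trans_le hk]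

theorem topSum_mono (ν : Fin m → ℕ) : Monotone (topSum ν) := fun _ _ h =>
  sum_le_sum_of_subset (range_subset_range.mpr h)

theorem topSum_le_topSum_of_dominates {a b : Fin m → ℕ} (h : Dominates a b)
    (hsum : ∑ t, a t = ∑ t, b t) (k : ℕ) : topSum a k ≤ topSum b k := by
  rcases k with _ | k
  · exact le_rfl
  by_cases hk : k < m
  · have hfilter : (univ.filter fun t : Fin m => (t : ℕ) < k + 1) = univ.filter (· ≤ ⟨k, hk⟩) := by
      ext t
      simp [Fin.le_def]
    rw [topSum_eq_sum_filter, topSum_eq_sum_filter, hfilter]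
    exact h ⟨k, hk⟩
  · rw [topSum_of_le a (by omega), topSum_of_le b (by omega), hsum]

theorem sum_padZero_le_topSum {α ν : Fin m → ℕ}
    (hdom : ∀ S : Finset (Fin m), ∑ q ∈ S, α q ≤ topSum ν #S) (S : Finset ℕ) :
    ∑ i ∈ S, padZero α i ≤ topSum ν #S := by
  have hinj : Set.InjOn (Fin.val : Fin m → ℕ) (Fin.val ⁻¹' (S : Set ℕ)) :=
    Fin.val_injective.injOn
  rw [← sum_preimage Fin.val S hinj (padZero α)
    fun i _ hi => padZero_of_le α (not_lt.mp fun h => hi ⟨⟨i, h⟩, rfl⟩)]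
  refine (sum_congr rfl fun q _ => padZero_val α q).trans_le
    ((hdom _).trans (topSum_mono ν ?_))
  rw [card_preimage]
  exact card_filter_le _ _

/-- The lattice points of the permutahedron of `ν`, cut out by Rado's inequalities. -/
def permutahedron (ν : Fin m → ℕ) : Set (Fin m → ℕ) :=
  {α | ∑ q, α q = ∑ q, ν q ∧ ∀ S : Finset (Fin m), ∑ q ∈ S, α q ≤ topSum ν #S}

theorem permutahedron_subset_of_dominates {a b : Fin m → ℕ} (h : Dominates a b)
    (hsum : ∑ t, a t = ∑ t, b t) : permutahedron a ⊆ permutahedron b :=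
  fun _ ⟨hα, hS⟩ => ⟨hα.trans hsum, fun S => (hS S).trans (topSum_le_topSum_of_dominates h hsum _)⟩

end Permutahedron

theorem finite_ssyt_lt (D : YoungDiagram) (m : ℕ) (P : SemistandardYoungTableau D → Prop) :
    Finite {T : SemistandardYoungTableau D // (∀ i j, (i, j) ∈ D → T i j < m) ∧ P T} := by
  refine Finite.of_injective (β := D.cells → Fin m)
    (fun T c => ⟨T.1 c.1.1 c.1.2, T.2.1 _ _ ((YoungDiagram.mem_cells _).mp c.2)⟩) ?_
  intro T₁ T₂ h
  refine Subtype.ext (SemistandardYoungTableau.ext fun i j => ?_)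
  by_cases hm : (i, j) ∈ D
  · exact congrArg Fin.val (congrFun h ⟨(i, j), (YoungDiagram.mem_cells _).mpr hm⟩)
  · rw [T₁.1.zeros hm, T₂.1.zeros hm]

/-- Rado's theorem for Kostka numbers. -/
theorem schurCoeff_ne_zero_iff {m : ℕ} {ν : Fin m → ℕ} (hν : Antitone ν) (α : Fin m → ℕ) :
    schurCoeff m (diagramOf ν hν) α ≠ 0 ↔ α ∈ permutahedron ν := by
  have hν0 : ∀ i, m ≤ i → padZero ν i = 0 := fun i => padZero_of_le ν
  rw [diagramOf_eq_ofAntitone, schurCoeff, Nat.card_ne_zero]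
  set D := YoungDiagram.ofAntitone (padZero ν) (antitone_padZero hν) m
  constructor
  · rintro ⟨⟨T, hT, hTc⟩, -⟩
    have hsum : ∀ S : Finset (Fin m), ∑ q ∈ S, α q = ∑ e ∈ S.map Fin.valEmbedding, content D T e :=
      fun S => by
        rw [sum_map]
        exact sum_congr rfl fun q _ => (hTc q).symm
    refine ⟨?_, fun S => ?_⟩
    · calc ∑ q, α q = ∑ q : Fin m, content D T q := sum_congr rfl fun q _ => (hTc q).symm
        _ = ∑ e ∈ range m, content D T e := Fin.sum_univ_eq_sum_range _ _
        _ = #D.cells := by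
          rw [T.sum_content,
            filter_true_of_mem fun c hc =>
              mem_range.mpr (hT c.1 c.2 ((YoungDiagram.mem_cells _).mp hc))]
        _ = ∑ q, ν q := by
          rw [YoungDiagram.card_cells_ofAntitone hν0, ← topSum, topSum_of_le ν le_rfl]
    · rw [hsum]
      refine (T.sum_content_le_sum_rowLen _).trans_eq ?_
      rw [card_map]
      exact sum_congr rfl fun r _ => YoungDiagram.rowLen_ofAntitone hν0 r
  · rintro ⟨hsum, hdom⟩
    refine ⟨?_, finite_ssyt_lt _ _ _⟩
    obtain ⟨T, hT, hTc⟩ := exists_ssyt_content m (padZero ν) (antitone_padZero hν) hν0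
      (padZero α) (fun i => padZero_of_le α) (sum_padZero_le_topSum hdom) (by
        change topSum α m = topSum ν m
        rw [topSum_of_le α le_rfl, topSum_of_le ν le_rfl, hsum])
    exact ⟨⟨T, hT, fun q => by rw [hTc, padZero_val]⟩⟩

theorem exists_supporting_line {f : ℕ → ℝ} {l : ℕ}
    (hf : ∀ p, p + 2 ≤ l → f (p + 2) - f (p + 1) ≤ f (p + 1) - f p) {i : ℕ} (hi : i ≤ l) :
    ∃ δ : ℝ, ∀ j ≤ l, f j ≤ f i + (j - i) * δ := by
  have hinc : ∀ p q, p ≤ q → q < l → f (q + 1) - f q ≤ f (p + 1) - f p := by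
    intro p q hpq
    induction q, hpq using Nat.le_induction with
    | base => exact fun _ => le_rfl
    | succ q _ ih => exact fun hq => (hf q (by omega)).trans (ih (by omega))
  -- the slope of the chord starting at `i`, or ending at `i = l`
  set c := min i (l - 1)
  refine ⟨f (c + 1) - f c, fun j hj => ?_⟩
  rcases le_total i j with hij | hji
  · have h := sum_le_card_nsmul (Ico i j) (fun p => f (p + 1) - f p) (f (c + 1) - f c)
      fun p hp => by rw [mem_Ico] at hp; exact hinc c p (by omega) (by omega)
    rw [sum_Ico_sub f hij, Nat.card_Ico, nsmul_eq_mul, Nat.cast_sub hij] at h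
    linarith
  · have h := card_nsmul_le_sum (Ico j i) (fun p => f (p + 1) - f p) (f (c + 1) - f c)
      fun p hp => by rw [mem_Ico] at hp; exact hinc p c (by omega) (by omega)
    rw [sum_Ico_sub f hji, Nat.card_Ico, nsmul_eq_mul, Nat.cast_sub hji] at h
    linarith

theorem sum_le_of_mem_convexHull {ι : Type*} [Fintype ι] {s : Set (ι → ℝ)} {x : ι → ℝ}
    (hx : x ∈ convexHull ℝ s) (S : Finset ι) (a δ : ℝ)
    (h : ∀ y ∈ s, ∑ q ∈ S, y q ≤ a + δ * ∑ q, y q) : ∑ q ∈ S, x q ≤ a + δ * ∑ q, x q := by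
  have hlin : IsLinearMap ℝ fun y : ι → ℝ => ∑ q ∈ S, y q - δ * ∑ q, y q := by
    constructor <;> intros <;> simp only [Pi.add_apply, Pi.smul_apply, smul_eq_mul, sum_add_distrib,
      ← mul_sum] <;> ring
  have := convexHull_min (fun y hy => (sub_le_iff_le_add.mpr (h y hy) : _ ≤ a))
    (convex_halfSpace_le hlin a) hx
  exact sub_le_iff_le_add.mp this

theorem exists_nat_eq_of_isLattice {m : ℕ} {x : Fin m → ℝ} (hx : 0 ≤ x) (hlat : IsLattice x) :
    ∃ n : Fin m → ℕ, x = fun q => (n q : ℝ) := by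
  choose z hz using hlat
  refine ⟨fun q => (z q).toNat, funext fun q => ?_⟩
  have : (0 : ℝ) ≤ z q := hz q ▸ hx q
  rw [hz q]
  exact_mod_cast (Int.toNat_of_nonneg (Int.cast_nonneg_iff.mp this)).symm

theorem sum_mem_Icc_of_mem_convexHull {ι : Type*} [Fintype ι] {s : Set (ι → ℝ)} {x : ι → ℝ}
    (hx : x ∈ convexHull ℝ s) {a b : ℝ} (h : ∀ y ∈ s, ∑ q, y q ∈ Set.Icc a b) :
    ∑ q, x q ∈ Set.Icc a b := by
  have hlow := sum_le_of_mem_convexHull hx ∅ (-a) 1 fun y hy => by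
    rw [sum_empty]
    linarith [(h y hy).1]
  have hhigh := sum_le_of_mem_convexHull hx univ b 0 fun y hy => by
    rw [zero_mul, add_zero]
    exact (h y hy).2
  rw [sum_empty] at hlow
  exact ⟨by linarith, by linarith⟩

section NorthmostChain

variable {m : ℕ}

theorem addBoxAt_eq_add_single (ν : Fin m → ℕ) (t : Fin m) :
    AddBoxAt ν t = ν + Pi.single t 1 := by
  ext s
  by_cases hs : s = t
  · subst hs
    simp [AddBoxAt]
  · simp [AddBoxAt, hs]

theorem le_addBoxAt (ν : Fin m → ℕ) (t : Fin m) : ν ≤ AddBoxAt ν t := by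
  rw [addBoxAt_eq_add_single]
  exact le_self_add

theorem sum_addBoxAt (ν : Fin m → ℕ) (t : Fin m) : ∑ s, AddBoxAt ν t s = ∑ s, ν s + 1 := by
  simp [addBoxAt_eq_add_single, sum_add_distrib]

theorem topSum_addBoxAt (ν : Fin m → ℕ) (t : Fin m) (k : ℕ) :
    topSum (AddBoxAt ν t) k = topSum ν k + if (t : ℕ) < k then 1 else 0 := by
  simp [topSum_eq_sum_filter, addBoxAt_eq_add_single, sum_add_distrib, sum_pi_single']

theorem addBoxAt_admissible_iff {β ν : Fin m → ℕ} (hν : Antitone ν) (hβ : ν ≤ β) (t : Fin m) :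
    (Antitone (AddBoxAt ν t) ∧ AddBoxAt ν t ≤ β) ↔ (∀ s < t, ν t < ν s) ∧ ν t < β t := by
  simp only [AddBoxAt]
  constructor
  · rintro ⟨hanti, hle⟩
    refine ⟨fun s hs => ?_, ?_⟩
    · have := hanti hs.le
      rwa [Function.update_self, Function.update_of_ne hs.ne] at this
    · have := hle t
      rwa [Function.update_self] at this
  · rintro ⟨hlt, hlt'⟩
    refine ⟨fun a b hab => ?_, fun s => ?_⟩
    · rcases eq_or_ne b t with rfl | hb
      · rcases hab.eq_or_lt with rfl | hab
        · exact le_rfl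
        · rw [Function.update_self, Function.update_of_ne hab.ne]
          exact hlt a hab
      · rw [Function.update_of_ne hb]
        rcases eq_or_ne a t with rfl | ha
        · rw [Function.update_self]
          exact (hν hab).trans (Nat.le_succ _)
        · rw [Function.update_of_ne ha]
          exact hν hab
    · rcases eq_or_ne s t with rfl | hs
      · rwa [Function.update_self]
      · rw [Function.update_of_ne hs]
        exact hβ s

/-- A box addable at a row `r₁ < r₀` after the step would have been addable there before it,
since the rows above `r₀` are unchanged. -/
theorem row_le_of_northmost {β ν₀ ν₁ : Fin m → ℕ} {r₀ r₁ : Fin m} (hν₀ : Antitone ν₀)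
    (h₀ : ν₁ = AddBoxAt ν₀ r₀) (hν₁ : Antitone ν₁) (hν₁β : ν₁ ≤ β)
    (hmin : ∀ r' < r₀, ¬ (Antitone (AddBoxAt ν₀ r') ∧ AddBoxAt ν₀ r' ≤ β))
    (h₁ : Antitone (AddBoxAt ν₁ r₁) ∧ AddBoxAt ν₁ r₁ ≤ β) : r₀ ≤ r₁ := by
  by_contra! hlt
  have hsame : ∀ s ≤ r₁, ν₁ s = ν₀ s := fun s hs => by
    rw [h₀, AddBoxAt, Function.update_of_ne (hs.trans_lt hlt).ne]
  obtain ⟨habove, hβ⟩ := (addBoxAt_admissible_iff hν₁ hν₁β r₁).mp h₁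
  refine hmin r₁ hlt ((addBoxAt_admissible_iff hν₀ ((h₀ ▸ le_addBoxAt ν₀ r₀).trans hν₁β) r₁).mpr
    ⟨fun s hs => ?_, ?_⟩)
  · rw [← hsame s hs.le, ← hsame r₁ le_rfl]
    exact habove s hs
  · rw [← hsame r₁ le_rfl]
    exact hβ

variable {l : ℕ} {lam : ℕ → Fin m → ℕ}

theorem sum_chain (hstep : ∀ i < l, NorthmostStep (lam l) (lam i) (lam (i + 1))) {i : ℕ}
    (hi : i ≤ l) : ∑ k, lam i k = ∑ k, lam 0 k + i := by
  induction i with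
  | zero => rfl
  | succ i ih =>
    obtain ⟨r, hr, -⟩ := hstep i hi
    rw [hr, sum_addBoxAt, ih (by omega), add_assoc]

theorem topSum_chain_concave (hanti : ∀ i ≤ l, Antitone (lam i))
    (hstep : ∀ i < l, NorthmostStep (lam l) (lam i) (lam (i + 1))) (k p : ℕ) (hp : p + 2 ≤ l) :
    (topSum (lam (p + 2)) k : ℝ) - topSum (lam (p + 1)) k ≤
      (topSum (lam (p + 1)) k : ℝ) - topSum (lam p) k := by
  obtain ⟨r₀, h₀, hanti₀, hβ₀, hmin₀⟩ := hstep p (by omega)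
  obtain ⟨r₁, h₁, hanti₁, hβ₁, -⟩ := hstep (p + 1) (by omega)
  have hr : (r₀ : ℕ) ≤ r₁ :=
    row_le_of_northmost (hanti p (by omega)) h₀ hanti₀ hβ₀ hmin₀ (h₁ ▸ ⟨hanti₁, hβ₁⟩)
  rw [h₁, topSum_addBoxAt, h₀, topSum_addBoxAt]
  split_ifs <;> push_cast <;> linarith

def chainPoints (lam : ℕ → Fin m → ℕ) (l : ℕ) : Set (Fin m → ℝ) :=
  {y | ∃ i ≤ l, ∃ α ∈ permutahedron (lam i), y = fun q => (α q : ℝ)}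

theorem exists_of_mem_chainPoints (hstep : ∀ i < l, NorthmostStep (lam l) (lam i) (lam (i + 1)))
    {y : Fin m → ℝ} (hy : y ∈ chainPoints lam l) :
    ∃ i ≤ l, ∑ q, y q = ∑ k, lam 0 k + i ∧
      ∀ S : Finset (Fin m), ∑ q ∈ S, y q ≤ topSum (lam i) #S := by
  obtain ⟨i, hi, α, ⟨hα, hS⟩, rfl⟩ := hy
  refine ⟨i, hi, ?_, fun S => ?_⟩ <;> beta_reduce
  · exact_mod_cast hα.trans (sum_chain hstep hi)
  · exact_mod_cast hS S

theorem exists_mem_permutahedron_of_mem_convexHull (hanti : ∀ i ≤ l, Antitone (lam i))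
    (hstep : ∀ i < l, NorthmostStep (lam l) (lam i) (lam (i + 1))) {x : Fin m → ℝ}
    (hx : x ∈ convexHull ℝ (chainPoints lam l)) (hlat : IsLattice x) :
    ∃ i ≤ l, ∃ n ∈ permutahedron (lam i), x = fun q => (n q : ℝ) := by
  obtain ⟨n, rfl⟩ := exists_nat_eq_of_isLattice (convexHull_min
    (by rintro _ ⟨i, -, α, -, rfl⟩ q; exact Nat.cast_nonneg _) (convex_Ici 0) hx) hlat
  set D₀ := ∑ k, lam 0 k
  obtain ⟨hlow, hhigh⟩ := sum_mem_Icc_of_mem_convexHull hx (a := D₀) (b := D₀ + l) fun y hy => by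
    obtain ⟨i, hi, hy, -⟩ := exists_of_mem_chainPoints hstep hy
    rw [hy]
    exact ⟨le_add_of_nonneg_right i.cast_nonneg, by exact_mod_cast Nat.add_le_add_left hi D₀⟩
  have hN : D₀ ≤ ∑ q, n q ∧ ∑ q, n q ≤ D₀ + l := ⟨by exact_mod_cast hlow, by exact_mod_cast hhigh⟩
  set i := ∑ q, n q - D₀
  have hi : i ≤ l := by omega
  have hsum : ∑ q, n q = D₀ + i := by omega
  refine ⟨i, hi, n, ⟨by rw [sum_chain hstep hi, hsum], fun S => ?_⟩, rfl⟩
  obtain ⟨δ, hδ⟩ := exists_supporting_line (f := fun p => (topSum (lam p) #S : ℝ))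
    (topSum_chain_concave hanti hstep #S) hi
  have := sum_le_of_mem_convexHull hx S (topSum (lam i) #S - δ * (D₀ + i)) δ fun y hy => by
    obtain ⟨j, hj, hy, hS⟩ := exists_of_mem_chainPoints hstep hy
    rw [hy]
    linarith [hS S, hδ j hj]
  have hsum' : ∑ q, (n q : ℝ) = D₀ + i := by exact_mod_cast hsum
  rw [hsum'] at this
  exact_mod_cast (show ∑ q ∈ S, (n q : ℝ) ≤ topSum (lam i) #S by linarith)

end NorthmostChain

theorem good_hasSNP_general (m l : ℕ) (ι : Type) [Fintype ι]
    (μ : ι → Fin m → ℕ) (hμ : ∀ j, Antitone (μ j))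
    (F : (Fin m → ℕ) → ℝ)
    -- condition (a)
    (ha : ∀ d : ℕ, {α : Fin m → ℕ | (∑ k, α k) = d ∧ F α ≠ 0} =
      ⋃ j ∈ {j : ι | ∑ k, μ j k = d}, {α | schurCoeff m (diagramOf (μ j) (hμ j)) α ≠ 0})
    -- condition (b)
    (lam : ℕ → Fin m → ℕ) (hanti : ∀ i ≤ l, Antitone (lam i))
    (hdeg : ∀ j : ι, ∃ i ≤ l, (∑ k, μ j k) = (∑ k, lam i k))
    (happ : ∀ i ≤ l, ∃ j : ι, μ j = lam i)
    (hmax : ∀ i ≤ l, ∀ j : ι, (∑ k, μ j k) = (∑ k, lam i k) → Dominates (μ j) (lam i))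
    (hstep : ∀ i < l, NorthmostStep (lam l) (lam i) (lam (i + 1))) :
    HasSNP F := by
  have hF : ∀ α, F α ≠ 0 ↔ ∃ j, ∑ k, μ j k = ∑ k, α k ∧ α ∈ permutahedron (μ j) := fun α => by
    have := Set.ext_iff.mp (ha (∑ k, α k)) α
    simpa only [Set.mem_ofPred_eq, Set.mem_iUnion, true_and, exists_prop,
      schurCoeff_ne_zero_iff] using this
  have hsupp : Supp F ⊆ chainPoints lam l := by
    rintro _ ⟨α, hα, rfl⟩
    obtain ⟨j, -, hαj⟩ := (hF α).mp hα
    obtain ⟨i, hi, hji⟩ := hdeg j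
    exact ⟨i, hi, α, permutahedron_subset_of_dominates (hmax i hi j hji) hji hαj, rfl⟩
  refine Set.Subset.antisymm (fun x ⟨hx, hlat⟩ => ?_) fun x hx => ⟨subset_convexHull ℝ _ hx, ?_⟩
  · obtain ⟨i, hi, n, hn, rfl⟩ :=
      exists_mem_permutahedron_of_mem_convexHull hanti hstep (convexHull_mono hsupp hx) hlat
    obtain ⟨j, hj⟩ := happ i hi
    exact ⟨n, (hF n).mpr ⟨j, hj ▸ hn.1.symm, hj ▸ hn⟩, rfl⟩
  · obtain ⟨α, -, rfl⟩ := hx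
    exact fun q => ⟨α q, (Int.cast_natCast _).symm⟩

/-- A *good* linear combination of Schur polynomials has saturated Newton polytope.
Here `F = ∑ j, C j • s_{μ j}` with all `C j ≠ 0`;
condition (a): for each degree `d`, the support of the degree-`d` part of `F` is the union of
the supports of the Schur polynomials appearing in degree `d`;
condition (b): for each degree appearing there is a dominance-maximum partition `lam i`, these
appear in `F`, and they form a chain `lam 0 < lam 1 < … < lam l` in which each term is obtained
from the previous one by adding a box in the northmost admissible row (keeping a partition
`≤ lam l`). -/
theorem good_hasSNP (m l : ℕ) (ι : Type) [Fintype ι]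
    (C : ι → ℝ) (hC : ∀ j, C j ≠ 0)
    (μ : ι → Fin m → ℕ) (hμ : ∀ j, Antitone (μ j))
    (F : (Fin m → ℕ) → ℝ)
    (hF : F = fun α => ∑ j, C j * (schurCoeff m (diagramOf (μ j) (hμ j)) α : ℝ))
    -- condition (a)
    (ha : ∀ d : ℕ, {α : Fin m → ℕ | (∑ k, α k) = d ∧ F α ≠ 0} =
      ⋃ j ∈ {j : ι | ∑ k, μ j k = d}, {α | schurCoeff m (diagramOf (μ j) (hμ j)) α ≠ 0})
    -- condition (b)
    (lam : ℕ → Fin m → ℕ) (hanti : ∀ i ≤ l, Antitone (lam i))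
    (hdeg : ∀ j : ι, ∃ i ≤ l, (∑ k, μ j k) = (∑ k, lam i k))
    (happ : ∀ i ≤ l, ∃ j : ι, μ j = lam i)
    (hmax : ∀ i ≤ l, ∀ j : ι, (∑ k, μ j k) = (∑ k, lam i k) → Dominates (μ j) (lam i))
    (hstep : ∀ i < l, NorthmostStep (lam l) (lam i) (lam (i + 1))) :
    HasSNP F :=
  good_hasSNP_general m l ι μ hμ F ha lam hanti hdeg happ hmax hstep
end

section
/- The polynomial F = s_{(3,1,0)} + s_{(3,1,1)} + s_{(3,2,1)} in three variables has saturated Newton polytope. -/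
open Finset Pointwise

set_option maxHeartbeats 4000000
set_option maxRecDepth 10000000

/-! ### Auxiliary development -/

def mu4 : YoungDiagram := diagramOf ![3,1,0] (by decide)
def mu5 : YoungDiagram := diagramOf ![3,1,1] (by decide)
def mu6 : YoungDiagram := diagramOf ![3,2,1] (by decide)

def TabPred (m : ℕ) (μ : YoungDiagram) (α : Fin m → ℕ) (f : μ.cells → Fin m) : Prop :=
  (∀ c d : μ.cells, (c : ℕ × ℕ).1 = (d : ℕ × ℕ).1 → (c : ℕ × ℕ).2 ≤ (d : ℕ × ℕ).2 → f c ≤ f d) ∧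
  (∀ c d : μ.cells, (c : ℕ × ℕ).2 = (d : ℕ × ℕ).2 → (c : ℕ × ℕ).1 < (d : ℕ × ℕ).1 → f c < f d) ∧
  ∀ k : Fin m, (Finset.univ.filter fun c : μ.cells => f c = k).card = α k

instance (m : ℕ) (μ : YoungDiagram) (α : Fin m → ℕ) : DecidablePred (TabPred m μ α) :=
  fun _ => by unfold TabPred; infer_instance

def cnt (m : ℕ) (μ : YoungDiagram) (α : Fin m → ℕ) : ℕ :=
  (Finset.univ.filter (TabPred m μ α)).card

lemma filter_card_attach {μ : YoungDiagram} (p : ℕ × ℕ → Prop) [DecidablePred p] :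
    (Finset.univ.filter fun c : μ.cells => p (c : ℕ × ℕ)).card = (μ.cells.filter p).card := by
  rw [Finset.univ_eq_attach, Finset.filter_attach, Finset.card_map, Finset.card_attach]

lemma content_eq {μ : YoungDiagram} (T : SemistandardYoungTableau μ) (e : ℕ) :
    content μ T e
      = (Finset.univ.filter fun c : μ.cells => T (c : ℕ × ℕ).1 (c : ℕ × ℕ).2 = e).card :=
  (filter_card_attach _).symm

lemma cell_mem {μ : YoungDiagram} (c : μ.cells) : ((c : ℕ × ℕ).1, (c : ℕ × ℕ).2) ∈ μ := by
  rw [Prod.mk.eta]; exact (YoungDiagram.mem_cells _).mp c.2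

def invEntry {m : ℕ} {μ : YoungDiagram} (f : μ.cells → Fin m) : ℕ → ℕ → ℕ :=
  fun i j => if h : (i, j) ∈ μ then (f ⟨(i, j), h⟩ : ℕ) else 0

def invSSYT {m : ℕ} {μ : YoungDiagram} (f : μ.cells → Fin m)
    (hrow : ∀ c d : μ.cells,
      (c : ℕ × ℕ).1 = (d : ℕ × ℕ).1 → (c : ℕ × ℕ).2 ≤ (d : ℕ × ℕ).2 → f c ≤ f d)
    (hcol : ∀ c d : μ.cells,
      (c : ℕ × ℕ).2 = (d : ℕ × ℕ).2 → (c : ℕ × ℕ).1 < (d : ℕ × ℕ).1 → f c < f d) :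
    SemistandardYoungTableau μ where
  entry := invEntry f
  row_weak' := by
    intro i j1 j2 hj hm
    have hm1 : (i, j1) ∈ μ := μ.up_left_mem le_rfl hj.le hm
    simp only [invEntry, dif_pos hm1, dif_pos hm]
    exact_mod_cast hrow ⟨(i, j1), hm1⟩ ⟨(i, j2), hm⟩ rfl hj.le
  col_strict' := by
    intro i1 i2 j hi hm
    have hm1 : (i1, j) ∈ μ := μ.up_left_mem hi.le le_rfl hm
    simp only [invEntry, dif_pos hm1, dif_pos hm]
    exact_mod_cast hcol ⟨(i1, j), hm1⟩ ⟨(i2, j), hm⟩ rfl hi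
  zeros' := by intro i j h; simp only [invEntry, dif_neg h]

def tabEquiv (m : ℕ) (μ : YoungDiagram) (α : Fin m → ℕ) :
    {T : SemistandardYoungTableau μ // (∀ i j : ℕ, (i, j) ∈ μ → T i j < m) ∧
      ∀ k : Fin m, content μ T (k : ℕ) = α k} ≃ {f : μ.cells → Fin m // TabPred m μ α f} where
  toFun := fun x => ⟨fun c => ⟨x.1 (c : ℕ × ℕ).1 (c : ℕ × ℕ).2, x.2.1 _ _ (cell_mem c)⟩, by
    obtain ⟨T, hb, hc⟩ := x
    refine ⟨fun c d h1 h2 => ?_, fun c d h1 h2 => ?_, fun k => ?_⟩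
    · simp only [Fin.mk_le_mk]
      rcases eq_or_lt_of_le h2 with h2 | h2
      · rw [h1, h2]
      · rw [h1]
        exact T.row_weak h2 (cell_mem d)
    · rw [Fin.mk_lt_mk, h1]
      exact T.col_strict h2 (cell_mem d)
    · rw [← hc k, content_eq]
      congr 1
      apply Finset.filter_congr
      intro c _
      simp [Fin.ext_iff]⟩
  invFun := fun x =>
    ⟨invSSYT x.1 x.2.1 x.2.2.1,
     by
      constructor
      · intro i j h
        show invEntry x.1 i j < m
        rw [invEntry, dif_pos h]
        exact (x.1 ⟨(i, j), h⟩).isLt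
      · intro k
        rw [← x.2.2.2 k, content_eq]
        congr 1
        apply Finset.filter_congr
        intro c _
        show invEntry x.1 (c : ℕ × ℕ).1 (c : ℕ × ℕ).2 = (k : ℕ) ↔ _
        rw [invEntry, dif_pos (cell_mem c)]
        have hc : (⟨((c : ℕ × ℕ).1, (c : ℕ × ℕ).2), cell_mem c⟩ : μ.cells) = c :=
          Subtype.ext Prod.mk.eta
        rw [hc, Fin.ext_iff]⟩
  left_inv := fun x => by
    apply Subtype.ext
    ext i j
    show invEntry _ i j = x.1 i j
    rw [invEntry]
    split
    · rfl
    · exact (x.1.zeros' (by assumption)).symm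
  right_inv := fun x => by
    apply Subtype.ext
    funext c
    apply Fin.ext
    show invEntry x.1 (c : ℕ × ℕ).1 (c : ℕ × ℕ).2 = _
    rw [invEntry, dif_pos (cell_mem c)]

lemma schurCoeff_eq_cnt (m : ℕ) (μ : YoungDiagram) (α : Fin m → ℕ) :
    schurCoeff m μ α = cnt m μ α := by
  rw [schurCoeff, Nat.card_congr (tabEquiv m μ α), Nat.card_eq_fintype_card,
    Fintype.card_subtype, cnt]

lemma cnt_ne_zero {m : ℕ} {μ : YoungDiagram} {α : Fin m → ℕ} (f : μ.cells → Fin m)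
    (hf : TabPred m μ α f) : cnt m μ α ≠ 0 :=
  Finset.card_ne_zero_of_mem (Finset.mem_filter.mpr ⟨Finset.mem_univ f, hf⟩)

lemma cnt_exists {m : ℕ} {μ : YoungDiagram} {α : Fin m → ℕ} (h : cnt m μ α ≠ 0) :
    ∃ f : μ.cells → Fin m, TabPred m μ α f := by
  obtain ⟨f, hf⟩ := Finset.card_pos.mp (Nat.pos_of_ne_zero h)
  exact ⟨f, (Finset.mem_filter.mp hf).2⟩

lemma tabpred_sum {μ : YoungDiagram} {α : Fin 3 → ℕ} {f : μ.cells → Fin 3}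
    (h : TabPred 3 μ α f) : α 0 + α 1 + α 2 = μ.cells.card := by
  have key : ∑ k : Fin 3, α k = μ.cells.card := by
    calc ∑ k : Fin 3, α k
        = ∑ k : Fin 3, (Finset.univ.filter fun c : μ.cells => f c = k).card :=
          Finset.sum_congr rfl fun k _ => (h.2.2 k).symm
      _ = (Finset.univ : Finset μ.cells).card :=
          (Finset.card_eq_sum_card_fiberwise fun c _ => Finset.mem_univ (f c)).symm
      _ = Fintype.card μ.cells := Finset.card_univ
      _ = μ.cells.card := Fintype.card_coe _
  simpa [Fin.sum_univ_three] using key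

lemma tabpred_le {m : ℕ} {μ : YoungDiagram} {α : Fin m → ℕ} {f : μ.cells → Fin m}
    (h : TabPred m μ α f) {N : ℕ} (hN : ∀ c : μ.cells, (c : ℕ × ℕ).2 < N) (k : Fin m) :
    α k ≤ N := by
  rw [← h.2.2 k]
  have hle : (Finset.univ.filter fun c : μ.cells => f c = k).card ≤ (Finset.range N).card := by
    refine Finset.card_le_card_of_injOn (fun c => (c : ℕ × ℕ).2)
      (fun c _ => Finset.mem_range.mpr (hN c)) ?_
    intro c hc d hd hcd
    · 
      simp only [Finset.coe_filter, Set.mem_setOf_eq] at hc hd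
      rcases lt_trichotomy ((c : ℕ × ℕ).1) ((d : ℕ × ℕ).1) with hlt | heq | hgt
      · exact absurd (h.2.1 c d hcd hlt) (by rw [hc.2, hd.2]; exact lt_irrefl _)
      · exact Subtype.ext (Prod.ext heq hcd)
      · exact absurd (h.2.1 d c hcd.symm hgt) (by rw [hc.2, hd.2]; exact lt_irrefl _)
  simpa using hle

lemma mu4_cols : ∀ c : mu4.cells, (c : ℕ × ℕ).2 < 3 := by decide
lemma mu5_cols : ∀ c : mu5.cells, (c : ℕ × ℕ).2 < 3 := by decide
lemma mu6_cols : ∀ c : mu6.cells, (c : ℕ × ℕ).2 < 3 := by decide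
lemma mu4_card : mu4.cells.card = 4 := by decide
lemma mu5_card : mu5.cells.card = 5 := by decide
lemma mu6_card : mu6.cells.card = 6 := by decide

lemma z5_023 : cnt 3 mu5 ![0,2,3] = 0 := by decide
lemma z5_032 : cnt 3 mu5 ![0,3,2] = 0 := by decide
lemma z5_203 : cnt 3 mu5 ![2,0,3] = 0 := by decide
lemma z5_230 : cnt 3 mu5 ![2,3,0] = 0 := by decide
lemma z5_302 : cnt 3 mu5 ![3,0,2] = 0 := by decide
lemma z5_320 : cnt 3 mu5 ![3,2,0] = 0 := by decide
lemma z6_033 : cnt 3 mu6 ![0,3,3] = 0 := by decide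
lemma z6_303 : cnt 3 mu6 ![3,0,3] = 0 := by decide
lemma z6_330 : cnt 3 mu6 ![3,3,0] = 0 := by decide

lemma w4_013 : TabPred 3 mu4 ![0,1,3] (fun c => if (c : ℕ × ℕ) = (0, 0) then 1 else if (c : ℕ × ℕ) = (0, 1) then 2 else if (c : ℕ × ℕ) = (0, 2) then 2 else 2) := by decide
lemma w4_022 : TabPred 3 mu4 ![0,2,2] (fun c => if (c : ℕ × ℕ) = (0, 0) then 1 else if (c : ℕ × ℕ) = (0, 1) then 1 else if (c : ℕ × ℕ) = (0, 2) then 2 else 2) := by decide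
lemma w4_031 : TabPred 3 mu4 ![0,3,1] (fun c => if (c : ℕ × ℕ) = (0, 0) then 1 else if (c : ℕ × ℕ) = (0, 1) then 1 else if (c : ℕ × ℕ) = (0, 2) then 1 else 2) := by decide
lemma w4_103 : TabPred 3 mu4 ![1,0,3] (fun c => if (c : ℕ × ℕ) = (0, 0) then 0 else if (c : ℕ × ℕ) = (0, 1) then 2 else if (c : ℕ × ℕ) = (0, 2) then 2 else 2) := by decide
lemma w4_112 : TabPred 3 mu4 ![1,1,2] (fun c => if (c : ℕ × ℕ) = (0, 0) then 0 else if (c : ℕ × ℕ) = (0, 1) then 1 else if (c : ℕ × ℕ) = (0, 2) then 2 else 2) := by decide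
lemma w4_121 : TabPred 3 mu4 ![1,2,1] (fun c => if (c : ℕ × ℕ) = (0, 0) then 0 else if (c : ℕ × ℕ) = (0, 1) then 1 else if (c : ℕ × ℕ) = (0, 2) then 1 else 2) := by decide
lemma w4_130 : TabPred 3 mu4 ![1,3,0] (fun c => if (c : ℕ × ℕ) = (0, 0) then 0 else if (c : ℕ × ℕ) = (0, 1) then 1 else if (c : ℕ × ℕ) = (0, 2) then 1 else 1) := by decide
lemma w4_202 : TabPred 3 mu4 ![2,0,2] (fun c => if (c : ℕ × ℕ) = (0, 0) then 0 else if (c : ℕ × ℕ) = (0, 1) then 0 else if (c : ℕ × ℕ) = (0, 2) then 2 else 2) := by decide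
lemma w4_211 : TabPred 3 mu4 ![2,1,1] (fun c => if (c : ℕ × ℕ) = (0, 0) then 0 else if (c : ℕ × ℕ) = (0, 1) then 0 else if (c : ℕ × ℕ) = (0, 2) then 1 else 2) := by decide
lemma w4_220 : TabPred 3 mu4 ![2,2,0] (fun c => if (c : ℕ × ℕ) = (0, 0) then 0 else if (c : ℕ × ℕ) = (0, 1) then 0 else if (c : ℕ × ℕ) = (0, 2) then 1 else 1) := by decide
lemma w4_301 : TabPred 3 mu4 ![3,0,1] (fun c => if (c : ℕ × ℕ) = (0, 0) then 0 else if (c : ℕ × ℕ) = (0, 1) then 0 else if (c : ℕ × ℕ) = (0, 2) then 0 else 2) := by decide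
lemma w4_310 : TabPred 3 mu4 ![3,1,0] (fun c => if (c : ℕ × ℕ) = (0, 0) then 0 else if (c : ℕ × ℕ) = (0, 1) then 0 else if (c : ℕ × ℕ) = (0, 2) then 0 else 1) := by decide
lemma w5_113 : TabPred 3 mu5 ![1,1,3] (fun c => if (c : ℕ × ℕ) = (0, 0) then 0 else if (c : ℕ × ℕ) = (0, 1) then 2 else if (c : ℕ × ℕ) = (0, 2) then 2 else if (c : ℕ × ℕ) = (1, 0) then 1 else 2) := by decide
lemma w5_122 : TabPred 3 mu5 ![1,2,2] (fun c => if (c : ℕ × ℕ) = (0, 0) then 0 else if (c : ℕ × ℕ) = (0, 1) then 1 else if (c : ℕ × ℕ) = (0, 2) then 2 else if (c : ℕ × ℕ) = (1, 0) then 1 else 2) := by decide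
lemma w5_131 : TabPred 3 mu5 ![1,3,1] (fun c => if (c : ℕ × ℕ) = (0, 0) then 0 else if (c : ℕ × ℕ) = (0, 1) then 1 else if (c : ℕ × ℕ) = (0, 2) then 1 else if (c : ℕ × ℕ) = (1, 0) then 1 else 2) := by decide
lemma w5_212 : TabPred 3 mu5 ![2,1,2] (fun c => if (c : ℕ × ℕ) = (0, 0) then 0 else if (c : ℕ × ℕ) = (0, 1) then 0 else if (c : ℕ × ℕ) = (0, 2) then 2 else if (c : ℕ × ℕ) = (1, 0) then 1 else 2) := by decide
lemma w5_221 : TabPred 3 mu5 ![2,2,1] (fun c => if (c : ℕ × ℕ) = (0, 0) then 0 else if (c : ℕ × ℕ) = (0, 1) then 0 else if (c : ℕ × ℕ) = (0, 2) then 1 else if (c : ℕ × ℕ) = (1, 0) then 1 else 2) := by decide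
lemma w5_311 : TabPred 3 mu5 ![3,1,1] (fun c => if (c : ℕ × ℕ) = (0, 0) then 0 else if (c : ℕ × ℕ) = (0, 1) then 0 else if (c : ℕ × ℕ) = (0, 2) then 0 else if (c : ℕ × ℕ) = (1, 0) then 1 else 2) := by decide
lemma w6_123 : TabPred 3 mu6 ![1,2,3] (fun c => if (c : ℕ × ℕ) = (0, 0) then 0 else if (c : ℕ × ℕ) = (0, 1) then 1 else if (c : ℕ × ℕ) = (0, 2) then 2 else if (c : ℕ × ℕ) = (1, 0) then 1 else if (c : ℕ × ℕ) = (1, 1) then 2 else 2) := by decide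
lemma w6_132 : TabPred 3 mu6 ![1,3,2] (fun c => if (c : ℕ × ℕ) = (0, 0) then 0 else if (c : ℕ × ℕ) = (0, 1) then 1 else if (c : ℕ × ℕ) = (0, 2) then 1 else if (c : ℕ × ℕ) = (1, 0) then 1 else if (c : ℕ × ℕ) = (1, 1) then 2 else 2) := by decide
lemma w6_213 : TabPred 3 mu6 ![2,1,3] (fun c => if (c : ℕ × ℕ) = (0, 0) then 0 else if (c : ℕ × ℕ) = (0, 1) then 0 else if (c : ℕ × ℕ) = (0, 2) then 2 else if (c : ℕ × ℕ) = (1, 0) then 1 else if (c : ℕ × ℕ) = (1, 1) then 2 else 2) := by decide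
lemma w6_222 : TabPred 3 mu6 ![2,2,2] (fun c => if (c : ℕ × ℕ) = (0, 0) then 0 else if (c : ℕ × ℕ) = (0, 1) then 0 else if (c : ℕ × ℕ) = (0, 2) then 1 else if (c : ℕ × ℕ) = (1, 0) then 1 else if (c : ℕ × ℕ) = (1, 1) then 2 else 2) := by decide
lemma w6_231 : TabPred 3 mu6 ![2,3,1] (fun c => if (c : ℕ × ℕ) = (0, 0) then 0 else if (c : ℕ × ℕ) = (0, 1) then 0 else if (c : ℕ × ℕ) = (0, 2) then 1 else if (c : ℕ × ℕ) = (1, 0) then 1 else if (c : ℕ × ℕ) = (1, 1) then 1 else 2) := by decide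
lemma w6_312 : TabPred 3 mu6 ![3,1,2] (fun c => if (c : ℕ × ℕ) = (0, 0) then 0 else if (c : ℕ × ℕ) = (0, 1) then 0 else if (c : ℕ × ℕ) = (0, 2) then 0 else if (c : ℕ × ℕ) = (1, 0) then 1 else if (c : ℕ × ℕ) = (1, 1) then 2 else 2) := by decide
lemma w6_321 : TabPred 3 mu6 ![3,2,1] (fun c => if (c : ℕ × ℕ) = (0, 0) then 0 else if (c : ℕ × ℕ) = (0, 1) then 0 else if (c : ℕ × ℕ) = (0, 2) then 0 else if (c : ℕ × ℕ) = (1, 0) then 1 else if (c : ℕ × ℕ) = (1, 1) then 1 else 2) := by decide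

def SuppPred (α : Fin 3 → ℕ) : Prop :=
  α 0 ≤ 3 ∧ α 1 ≤ 3 ∧ α 2 ≤ 3 ∧ 4 ≤ α 0 + α 1 + α 2 ∧ α 0 + α 1 + α 2 ≤ 6 ∧
  α 0 + α 1 ≤ 4 + α 2 ∧ α 0 + α 2 ≤ 4 + α 1 ∧ α 1 + α 2 ≤ 4 + α 0

lemma nat_le3 {n : ℕ} (h : n ≤ 3) : n = 0 ∨ n = 1 ∨ n = 2 ∨ n = 3 := by omega

lemma nz1 {a b c : ℕ} (h : a ≠ 0) : a + b + c ≠ 0 := by omega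
lemma nz2 {a b c : ℕ} (h : b ≠ 0) : a + b + c ≠ 0 := by omega
lemma nz3 {a b c : ℕ} (h : c ≠ 0) : a + b + c ≠ 0 := by omega

lemma main_iff (α : Fin 3 → ℕ) :
    cnt 3 mu4 α + cnt 3 mu5 α + cnt 3 mu6 α ≠ 0 ↔ SuppPred α := by
  have hα : α = ![α 0, α 1, α 2] := by
    funext i; fin_cases i <;> rfl
  constructor
  · intro hsum
    have hcase : cnt 3 mu4 α ≠ 0 ∨ cnt 3 mu5 α ≠ 0 ∨ cnt 3 mu6 α ≠ 0 := by omega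
    clear hsum
    rcases hcase with hne | hne | hne
    · obtain ⟨f, hf⟩ := cnt_exists hne
      have hs := tabpred_sum hf
      rw [mu4_card] at hs
      have hb0 := tabpred_le hf mu4_cols 0
      have hb1 := tabpred_le hf mu4_cols 1
      have hb2 := tabpred_le hf mu4_cols 2
      clear hne hf
      exact ⟨by omega, by omega, by omega, by omega, by omega, by omega, by omega, by omega⟩
    · obtain ⟨f, hf⟩ := cnt_exists hne
      have hs := tabpred_sum hf
      rw [mu5_card] at hs
      have hb0 := tabpred_le hf mu5_cols 0
      have hb1 := tabpred_le hf mu5_cols 1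
      have hb2 := tabpred_le hf mu5_cols 2
      clear hf
      have key1 : α 0 + α 1 ≤ 4 + α 2 := by
        by_contra hq
        have e2 : α 2 = 0 := by omega
        rcases Nat.lt_or_ge (α 0) 3 with h' | h'
        · have e0 : α 0 = 2 := by omega
          have e1 : α 1 = 3 := by omega
          exact hne (by rw [hα, e0, e1, e2]; exact z5_230)
        · have e0 : α 0 = 3 := by omega
          have e1 : α 1 = 2 := by omega
          exact hne (by rw [hα, e0, e1, e2]; exact z5_320)
      have key2 : α 0 + α 2 ≤ 4 + α 1 := by
        by_contra hq
        have e1 : α 1 = 0 := by omega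
        rcases Nat.lt_or_ge (α 0) 3 with h' | h'
        · have e0 : α 0 = 2 := by omega
          have e2 : α 2 = 3 := by omega
          exact hne (by rw [hα, e0, e1, e2]; exact z5_203)
        · have e0 : α 0 = 3 := by omega
          have e2 : α 2 = 2 := by omega
          exact hne (by rw [hα, e0, e1, e2]; exact z5_302)
      have key3 : α 1 + α 2 ≤ 4 + α 0 := by
        by_contra hq
        have e0 : α 0 = 0 := by omega
        rcases Nat.lt_or_ge (α 1) 3 with h' | h'
        · have e1 : α 1 = 2 := by omega
          have e2 : α 2 = 3 := by omega
          exact hne (by rw [hα, e0, e1, e2]; exact z5_023)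
        · have e1 : α 1 = 3 := by omega
          have e2 : α 2 = 2 := by omega
          exact hne (by rw [hα, e0, e1, e2]; exact z5_032)
      exact ⟨by omega, by omega, by omega, by omega, by omega, key1, key2, key3⟩
    · obtain ⟨f, hf⟩ := cnt_exists hne
      have hs := tabpred_sum hf
      rw [mu6_card] at hs
      have hb0 := tabpred_le hf mu6_cols 0
      have hb1 := tabpred_le hf mu6_cols 1
      have hb2 := tabpred_le hf mu6_cols 2
      clear hf
      have key1 : α 0 + α 1 ≤ 4 + α 2 := by
        by_contra hq
        have e0 : α 0 = 3 := by omega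
        have e1 : α 1 = 3 := by omega
        have e2 : α 2 = 0 := by omega
        exact hne (by rw [hα, e0, e1, e2]; exact z6_330)
      have key2 : α 0 + α 2 ≤ 4 + α 1 := by
        by_contra hq
        have e0 : α 0 = 3 := by omega
        have e1 : α 1 = 0 := by omega
        have e2 : α 2 = 3 := by omega
        exact hne (by rw [hα, e0, e1, e2]; exact z6_303)
      have key3 : α 1 + α 2 ≤ 4 + α 0 := by
        by_contra hq
        have e0 : α 0 = 0 := by omega
        have e1 : α 1 = 3 := by omega
        have e2 : α 2 = 3 := by omega
        exact hne (by rw [hα, e0, e1, e2]; exact z6_033)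
      exact ⟨by omega, by omega, by omega, by omega, by omega, key1, key2, key3⟩
  · intro hS
    obtain ⟨hb0, hb1, hb2, hs4, hs6, hp1, hp2, hp3⟩ := hS
    have d0 := nat_le3 hb0
    have d1 := nat_le3 hb1
    have d2 := nat_le3 hb2
    rcases d0 with h1 | h1 | h1 | h1 <;> rcases d1 with h2 | h2 | h2 | h2 <;> rcases d2 with h3 | h3 | h3 | h3
    · exfalso; omega
    · exfalso; omega
    · exfalso; omega
    · exfalso; omega
    · exfalso; omega
    · exfalso; omega
    · exfalso; omega
    · have hcnt : cnt 3 mu4 α ≠ 0 := by rw [hα, h1, h2, h3]; exact cnt_ne_zero _ w4_013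
      exact nz1 hcnt
    · exfalso; omega
    · exfalso; omega
    · have hcnt : cnt 3 mu4 α ≠ 0 := by rw [hα, h1, h2, h3]; exact cnt_ne_zero _ w4_022
      exact nz1 hcnt
    · exfalso; omega
    · exfalso; omega
    · have hcnt : cnt 3 mu4 α ≠ 0 := by rw [hα, h1, h2, h3]; exact cnt_ne_zero _ w4_031
      exact nz1 hcnt
    · exfalso; omega
    · exfalso; omega
    · exfalso; omega
    · exfalso; omega
    · exfalso; omega
    · have hcnt : cnt 3 mu4 α ≠ 0 := by rw [hα, h1, h2, h3]; exact cnt_ne_zero _ w4_103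
      exact nz1 hcnt
    · exfalso; omega
    · exfalso; omega
    · have hcnt : cnt 3 mu4 α ≠ 0 := by rw [hα, h1, h2, h3]; exact cnt_ne_zero _ w4_112
      exact nz1 hcnt
    · have hcnt : cnt 3 mu5 α ≠ 0 := by rw [hα, h1, h2, h3]; exact cnt_ne_zero _ w5_113
      exact nz2 hcnt
    · exfalso; omega
    · have hcnt : cnt 3 mu4 α ≠ 0 := by rw [hα, h1, h2, h3]; exact cnt_ne_zero _ w4_121
      exact nz1 hcnt
    · have hcnt : cnt 3 mu5 α ≠ 0 := by rw [hα, h1, h2, h3]; exact cnt_ne_zero _ w5_122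
      exact nz2 hcnt
    · have hcnt : cnt 3 mu6 α ≠ 0 := by rw [hα, h1, h2, h3]; exact cnt_ne_zero _ w6_123
      exact nz3 hcnt
    · have hcnt : cnt 3 mu4 α ≠ 0 := by rw [hα, h1, h2, h3]; exact cnt_ne_zero _ w4_130
      exact nz1 hcnt
    · have hcnt : cnt 3 mu5 α ≠ 0 := by rw [hα, h1, h2, h3]; exact cnt_ne_zero _ w5_131
      exact nz2 hcnt
    · have hcnt : cnt 3 mu6 α ≠ 0 := by rw [hα, h1, h2, h3]; exact cnt_ne_zero _ w6_132
      exact nz3 hcnt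
    · exfalso; omega
    · exfalso; omega
    · exfalso; omega
    · have hcnt : cnt 3 mu4 α ≠ 0 := by rw [hα, h1, h2, h3]; exact cnt_ne_zero _ w4_202
      exact nz1 hcnt
    · exfalso; omega
    · exfalso; omega
    · have hcnt : cnt 3 mu4 α ≠ 0 := by rw [hα, h1, h2, h3]; exact cnt_ne_zero _ w4_211
      exact nz1 hcnt
    · have hcnt : cnt 3 mu5 α ≠ 0 := by rw [hα, h1, h2, h3]; exact cnt_ne_zero _ w5_212
      exact nz2 hcnt
    · have hcnt : cnt 3 mu6 α ≠ 0 := by rw [hα, h1, h2, h3]; exact cnt_ne_zero _ w6_213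
      exact nz3 hcnt
    · have hcnt : cnt 3 mu4 α ≠ 0 := by rw [hα, h1, h2, h3]; exact cnt_ne_zero _ w4_220
      exact nz1 hcnt
    · have hcnt : cnt 3 mu5 α ≠ 0 := by rw [hα, h1, h2, h3]; exact cnt_ne_zero _ w5_221
      exact nz2 hcnt
    · have hcnt : cnt 3 mu6 α ≠ 0 := by rw [hα, h1, h2, h3]; exact cnt_ne_zero _ w6_222
      exact nz3 hcnt
    · exfalso; omega
    · exfalso; omega
    · have hcnt : cnt 3 mu6 α ≠ 0 := by rw [hα, h1, h2, h3]; exact cnt_ne_zero _ w6_231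
      exact nz3 hcnt
    · exfalso; omega
    · exfalso; omega
    · exfalso; omega
    · have hcnt : cnt 3 mu4 α ≠ 0 := by rw [hα, h1, h2, h3]; exact cnt_ne_zero _ w4_301
      exact nz1 hcnt
    · exfalso; omega
    · exfalso; omega
    · have hcnt : cnt 3 mu4 α ≠ 0 := by rw [hα, h1, h2, h3]; exact cnt_ne_zero _ w4_310
      exact nz1 hcnt
    · have hcnt : cnt 3 mu5 α ≠ 0 := by rw [hα, h1, h2, h3]; exact cnt_ne_zero _ w5_311
      exact nz2 hcnt
    · have hcnt : cnt 3 mu6 α ≠ 0 := by rw [hα, h1, h2, h3]; exact cnt_ne_zero _ w6_312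
      exact nz3 hcnt
    · exfalso; omega
    · exfalso; omega
    · have hcnt : cnt 3 mu6 α ≠ 0 := by rw [hα, h1, h2, h3]; exact cnt_ne_zero _ w6_321
      exact nz3 hcnt
    · exfalso; omega
    · exfalso; omega
    · exfalso; omega
    · exfalso; omega
    · exfalso; omega
    · exfalso; omega

def Kset : Set (Fin 3 → ℝ) :=
  {x | (0 ≤ x 0 ∧ 0 ≤ x 1 ∧ 0 ≤ x 2) ∧ (x 0 ≤ 3 ∧ x 1 ≤ 3 ∧ x 2 ≤ 3) ∧
    4 ≤ x 0 + x 1 + x 2 ∧ x 0 + x 1 + x 2 ≤ 6 ∧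
    x 0 + x 1 ≤ 4 + x 2 ∧ x 0 + x 2 ≤ 4 + x 1 ∧ x 1 + x 2 ≤ 4 + x 0}

lemma comb_le {a b u v c : ℝ} (ha : 0 ≤ a) (hb : 0 ≤ b) (hab : a + b = 1)
    (hu : u ≤ c) (hv : v ≤ c) : a * u + b * v ≤ c := by
  have hc : a * c + b * c = c := by rw [← add_mul, hab, one_mul]
  have h1 := mul_le_mul_of_nonneg_left hu ha
  have h2 := mul_le_mul_of_nonneg_left hv hb
  linarith

lemma comb_ge {a b u v c : ℝ} (ha : 0 ≤ a) (hb : 0 ≤ b) (hab : a + b = 1)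
    (hu : c ≤ u) (hv : c ≤ v) : c ≤ a * u + b * v := by
  have hc : a * c + b * c = c := by rw [← add_mul, hab, one_mul]
  have h1 := mul_le_mul_of_nonneg_left hu ha
  have h2 := mul_le_mul_of_nonneg_left hv hb
  linarith

lemma Kset_convex : Convex ℝ Kset := by
  intro x hx y hy a b ha hb hab
  obtain ⟨⟨hx0, hx1, hx2⟩, ⟨hx0', hx1', hx2'⟩, hxs4, hxs6, hxp1, hxp2, hxp3⟩ := hx
  obtain ⟨⟨hy0, hy1, hy2⟩, ⟨hy0', hy1', hy2'⟩, hys4, hys6, hyp1, hyp2, hyp3⟩ := hy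
  have e0 : (a • x + b • y) 0 = a * x 0 + b * y 0 := rfl
  have e1 : (a • x + b • y) 1 = a * x 1 + b * y 1 := rfl
  have e2 : (a • x + b • y) 2 = a * x 2 + b * y 2 := rfl
  refine ⟨⟨?_, ?_, ?_⟩, ⟨?_, ?_, ?_⟩, ?_, ?_, ?_, ?_, ?_⟩
  · rw [e0]; exact comb_ge ha hb hab hx0 hy0
  · rw [e1]; exact comb_ge ha hb hab hx1 hy1
  · rw [e2]; exact comb_ge ha hb hab hx2 hy2
  · rw [e0]; exact comb_le ha hb hab hx0' hy0'
  · rw [e1]; exact comb_le ha hb hab hx1' hy1'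
  · rw [e2]; exact comb_le ha hb hab hx2' hy2'
  · rw [e0, e1, e2]
    have := comb_ge ha hb hab hxs4 hys4
    linarith
  · rw [e0, e1, e2]
    have := comb_le ha hb hab hxs6 hys6
    linarith
  · rw [e0, e1, e2]
    have := comb_le ha hb hab (u := x 0 + x 1 - x 2) (v := y 0 + y 1 - y 2) (c := 4)
      (by linarith) (by linarith)
    linarith
  · rw [e0, e1, e2]
    have := comb_le ha hb hab (u := x 0 + x 2 - x 1) (v := y 0 + y 2 - y 1) (c := 4)
      (by linarith) (by linarith)
    linarith
  · rw [e0, e1, e2]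
    have := comb_le ha hb hab (u := x 1 + x 2 - x 0) (v := y 1 + y 2 - y 0) (c := 4)
      (by linarith) (by linarith)
    linarith

lemma final_snp :
    HasSNP (fun α : Fin 3 → ℕ =>
      (schurCoeff 3 (diagramOf ![3,1,0] (by decide)) α : ℝ) +
      (schurCoeff 3 (diagramOf ![3,1,1] (by decide)) α : ℝ) +
      (schurCoeff 3 (diagramOf ![3,2,1] (by decide)) α : ℝ)) := by
  set F : (Fin 3 → ℕ) → ℝ := fun α : Fin 3 → ℕ =>
      (schurCoeff 3 (diagramOf ![3,1,0] (by decide)) α : ℝ) +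
      (schurCoeff 3 (diagramOf ![3,1,1] (by decide)) α : ℝ) +
      (schurCoeff 3 (diagramOf ![3,2,1] (by decide)) α : ℝ) with hF
  have hFiff : ∀ α : Fin 3 → ℕ, F α ≠ 0 ↔ SuppPred α := by
    intro α
    have hFα : F α = ((cnt 3 mu4 α + cnt 3 mu5 α + cnt 3 mu6 α : ℕ) : ℝ) := by
      rw [hF]
      show ((schurCoeff 3 mu4 α : ℝ) + (schurCoeff 3 mu5 α : ℝ) + (schurCoeff 3 mu6 α : ℝ)) = _
      rw [schurCoeff_eq_cnt, schurCoeff_eq_cnt, schurCoeff_eq_cnt]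
      push_cast
      ring
    rw [hFα, ← main_iff α]
    exact_mod_cast Iff.rfl
  have hSuppK : Supp F ⊆ Kset := by
    rintro x ⟨α, hα, rfl⟩
    obtain ⟨hb0, hb1, hb2, hs4, hs6, hp1, hp2, hp3⟩ := (hFiff α).mp hα
    have r0 : (0 : ℝ) ≤ (α 0 : ℝ) := Nat.cast_nonneg _
    have r1 : (0 : ℝ) ≤ (α 1 : ℝ) := Nat.cast_nonneg _
    have r2 : (0 : ℝ) ≤ (α 2 : ℝ) := Nat.cast_nonneg _
    have r3 : (α 0 : ℝ) ≤ 3 := by exact_mod_cast hb0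
    have r4 : (α 1 : ℝ) ≤ 3 := by exact_mod_cast hb1
    have r5 : (α 2 : ℝ) ≤ 3 := by exact_mod_cast hb2
    have rs4 : (4 : ℝ) ≤ (α 0 : ℝ) + (α 1 : ℝ) + (α 2 : ℝ) := by exact_mod_cast hs4
    have rs6 : (α 0 : ℝ) + (α 1 : ℝ) + (α 2 : ℝ) ≤ 6 := by exact_mod_cast hs6
    have rp1 : (α 0 : ℝ) + (α 1 : ℝ) ≤ 4 + (α 2 : ℝ) := by exact_mod_cast hp1
    have rp2 : (α 0 : ℝ) + (α 2 : ℝ) ≤ 4 + (α 1 : ℝ) := by exact_mod_cast hp2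
    have rp3 : (α 1 : ℝ) + (α 2 : ℝ) ≤ 4 + (α 0 : ℝ) := by exact_mod_cast hp3
    exact ⟨⟨r0, r1, r2⟩, ⟨r3, r4, r5⟩, rs4, rs6, rp1, rp2, rp3⟩
  have hNewtK : NewtonP F ⊆ Kset := convexHull_min hSuppK Kset_convex
  apply Set.Subset.antisymm
  · rintro x ⟨hxN, hxL⟩
    have hxK := hNewtK hxN
    obtain ⟨⟨hk0, hk1, hk2⟩, ⟨hk0', hk1', hk2'⟩, hks4, hks6, hkp1, hkp2, hkp3⟩ := hxK
    choose z hz using hxL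
    simp only [hz] at hk0 hk1 hk2 hk0' hk1' hk2' hks4 hks6 hkp1 hkp2 hkp3
    have i0 : (0 : ℤ) ≤ z 0 := by exact_mod_cast hk0
    have i1 : (0 : ℤ) ≤ z 1 := by exact_mod_cast hk1
    have i2 : (0 : ℤ) ≤ z 2 := by exact_mod_cast hk2
    have j0 : z 0 ≤ 3 := by exact_mod_cast hk0'
    have j1 : z 1 ≤ 3 := by exact_mod_cast hk1'
    have j2 : z 2 ≤ 3 := by exact_mod_cast hk2'
    have js4 : (4 : ℤ) ≤ z 0 + z 1 + z 2 := by exact_mod_cast hks4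
    have js6 : z 0 + z 1 + z 2 ≤ 6 := by exact_mod_cast hks6
    have jp1 : z 0 + z 1 ≤ 4 + z 2 := by exact_mod_cast hkp1
    have jp2 : z 0 + z 2 ≤ 4 + z 1 := by exact_mod_cast hkp2
    have jp3 : z 1 + z 2 ≤ 4 + z 0 := by exact_mod_cast hkp3
    refine ⟨fun i => (z i).toNat, ?_, ?_⟩
    · apply (hFiff _).mpr
      show (z 0).toNat ≤ 3 ∧ (z 1).toNat ≤ 3 ∧ (z 2).toNat ≤ 3 ∧
        4 ≤ (z 0).toNat + (z 1).toNat + (z 2).toNat ∧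
        (z 0).toNat + (z 1).toNat + (z 2).toNat ≤ 6 ∧
        (z 0).toNat + (z 1).toNat ≤ 4 + (z 2).toNat ∧
        (z 0).toNat + (z 2).toNat ≤ 4 + (z 1).toNat ∧
        (z 1).toNat + (z 2).toNat ≤ 4 + (z 0).toNat
      refine ⟨by omega, by omega, by omega, by omega, by omega, by omega, by omega, by omega⟩
    · funext i
      rw [hz i]
      have : ((z i).toNat : ℤ) = z i := Int.toNat_of_nonneg (by
        fin_cases i
        · exact i0
        · exact i1
        · exact i2)
      exact_mod_cast congrArg (fun t : ℤ => (t : ℝ)) this.symm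
  · rintro x hx
    refine ⟨subset_convexHull ℝ _ hx, ?_⟩
    obtain ⟨α, hα, rfl⟩ := hx
    intro i
    exact ⟨(α i : ℤ), by push_cast; rfl⟩

/-- `F = s_{(3,1,0)} + s_{(3,1,1)} + s_{(3,2,1)}` in three variables has saturated Newton
polytope. -/
theorem s310_s311_s321_hasSNP :
    HasSNP (fun α : Fin 3 → ℕ =>
      (schurCoeff 3 (diagramOf ![3,1,0] (by decide)) α : ℝ) +
      (schurCoeff 3 (diagramOf ![3,1,1] (by decide)) α : ℝ) +
      (schurCoeff 3 (diagramOf ![3,2,1] (by decide)) α : ℝ)) := by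
  exact final_snp
end

section
/- Let alpha = lambda^0 < lambda^1 < ... < lambda^l = beta be a chain of partitions with at most m parts in which each lambda^i is obtained from lambda^{i-1} by adding one box, and suppose lambda^j is not of the form (beta_1,...,beta_i, alpha_{i+1},...,alpha_m) for any i. Then lambda^j = (lambda^{j-1} + lambda^{j+1})/2, and hence lambda^j is not a vertex of the convex hull of the union of the Newton polytopes of the s_{lambda^i}. -/
open Finset Pointwise

/-- A vertex of a subset `P` of `ℝ^m`: a point `v ∈ P` such that whenever `v` is a proper convex
combination of two points of `P`, both points equal `v`. -/
def IsVertex {m : ℕ} (P : Set (Fin m → ℝ)) (v : Fin m → ℝ) : Prop :=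
  v ∈ P ∧ ∀ w ∈ P, ∀ u ∈ P, ∀ t : ℝ, 0 < t → t < 1 → v = t • w + (1 - t) • u → w = v ∧ u = v


section Aux

variable {m : ℕ}

lemma addBoxAt_apply (ν : Fin m → ℕ) (r k : Fin m) :
    AddBoxAt ν r k = if k = r then ν r + 1 else ν k := by
  simp [AddBoxAt, Function.update_apply]

lemma chain_mono (l : ℕ) (lam : ℕ → Fin m → ℕ)
    (hstep : ∀ i < l, NorthmostStep (lam l) (lam i) (lam (i + 1))) :
    ∀ a b, a ≤ b → b ≤ l → ∀ k, lam a k ≤ lam b k := by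
  intro a b hab
  induction b, hab using Nat.le_induction with
  | base => intro _ k; exact le_rfl
  | succ n hn ih =>
    intro hnl k
    have h1 : lam a k ≤ lam n k := ih (by omega) k
    obtain ⟨r, hr, -, -, -⟩ := hstep n (by omega)
    rw [hr, addBoxAt_apply]
    split
    · next h => subst h; omega
    · exact h1

lemma prefix_full (l : ℕ) (lam : ℕ → Fin m → ℕ)
    (hanti : ∀ i ≤ l, Antitone (lam i))
    (hstep : ∀ i < l, NorthmostStep (lam l) (lam i) (lam (i + 1)))
    (i : ℕ) (hi : i < l) (r : Fin m)
    (hmin : ∀ r' : Fin m, r' < r →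
      ¬ (Antitone (AddBoxAt (lam i) r') ∧ AddBoxAt (lam i) r' ≤ lam l)) :
    ∀ k : Fin m, k < r → lam i k = lam l k := by
  have hle : ∀ k, lam i k ≤ lam l k := chain_mono l lam hstep i l (le_of_lt hi) le_rfl
  suffices key : ∀ n : ℕ, ∀ k : Fin m, (k : ℕ) < n → k < r → lam i k = lam l k by
    intro k hk
    exact key ((k : ℕ) + 1) k (Nat.lt_succ_self _) hk
  intro n
  induction n with
  | zero => intro k hk; exact absurd hk (Nat.not_lt_zero _)
  | succ n ihn =>
    intro k hkn hk
    have ih : ∀ a : Fin m, a < k → a < r → lam i a = lam l a := by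
      intro a ha har
      exact ihn a (by have := Fin.lt_def.mp ha; omega) har
    by_contra hne
    have hlt : lam i k < lam l k := lt_of_le_of_ne (hle k) hne
    refine hmin k hk ⟨?_, ?_⟩
    · intro a b hab
      rw [addBoxAt_apply, addBoxAt_apply]
      by_cases hb : b = k
      · subst hb
        rw [if_pos rfl]
        by_cases ha : a = b
        · rw [if_pos ha]
        · have hab' : a < b := lt_of_le_of_ne hab ha
          rw [if_neg ha]
          have h2 : lam i a = lam l a := ih a hab' (lt_trans hab' hk)
          have h3 : lam l b ≤ lam l a := hanti l le_rfl (le_of_lt hab')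
          omega
      · rw [if_neg hb]
        by_cases ha : a = k
        · rw [if_pos ha]
          have : lam i b ≤ lam i k := hanti i (le_of_lt hi) (ha ▸ hab)
          omega
        · rw [if_neg ha]; exact hanti i (le_of_lt hi) hab
    · rw [Pi.le_def]
      intro k'
      rw [addBoxAt_apply]
      split
      · next h => subst h; omega
      · exact hle k'

lemma invQ (l : ℕ) (lam : ℕ → Fin m → ℕ)
    (hanti : ∀ i ≤ l, Antitone (lam i))
    (hstep : ∀ i < l, NorthmostStep (lam l) (lam i) (lam (i + 1))) :
    ∀ i ≤ l, ∀ k k' : Fin m, k < k' → lam i k' ≠ lam 0 k' → lam i k = lam l k := by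
  intro i
  induction i with
  | zero => intro _ k k' _ h; exact absurd rfl h
  | succ n ih =>
    intro hn k k' hkk' hne
    have hnl : n < l := by omega
    obtain ⟨r, hr, hA, hB, hmin⟩ := hstep n hnl
    rw [Pi.le_def] at hB
    have hfull := prefix_full l lam hanti hstep n hnl r hmin
    by_cases hk'r : k' = r
    · have h1 : lam n k = lam l k := hfull k (hk'r ▸ hkk')
      have hkr : k ≠ r := by rw [← hk'r]; exact ne_of_lt hkk'
      rw [hr, addBoxAt_apply, if_neg hkr]
      exact h1
    · have hne' : lam n k' ≠ lam 0 k' := by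
        rw [hr, addBoxAt_apply, if_neg hk'r] at hne; exact hne
      have h1 : lam n k = lam l k := ih (le_of_lt hnl) k k' hkk' hne'
      rw [hr, addBoxAt_apply]
      split
      · next h =>
        exfalso
        have h2 := hB r
        rw [hr, addBoxAt_apply, if_pos rfl] at h2
        rw [h] at h1
        omega
      · exact h1

lemma mem_diagramOf (ν : Fin m → ℕ) (h : Antitone ν) (a b : ℕ) :
    (a, b) ∈ diagramOf ν h ↔ ∃ i : Fin m, a = (i : ℕ) ∧ b < ν i := by
  show (a, b) ∈ (diagramOf ν h).cells ↔ _
  simp only [diagramOf, Finset.mem_biUnion, Finset.mem_univ, true_and, Finset.mem_image,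
    Finset.mem_range, Prod.mk.injEq]
  constructor
  · rintro ⟨i, j, hj, hi, rfl⟩
    exact ⟨i, hi.symm, hj⟩
  · rintro ⟨i, rfl, hb⟩
    exact ⟨i, b, hb, rfl, rfl⟩

/-- The tableau whose entry in row `i` is `i`. -/
def rowTableau (ν : Fin m → ℕ) (h : Antitone ν) :
    SemistandardYoungTableau (diagramOf ν h) where
  entry i j := if (i, j) ∈ diagramOf ν h then i else 0
  row_weak' := by
    intro i j1 j2 hj hmem
    have h1 : (i, j1) ∈ diagramOf ν h :=
      (diagramOf ν h).up_left_mem le_rfl (le_of_lt hj) hmem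
    simp only [if_pos h1, if_pos hmem]
    exact le_rfl
  col_strict' := by
    intro i1 i2 j hi hmem
    have h1 : (i1, j) ∈ diagramOf ν h :=
      (diagramOf ν h).up_left_mem (le_of_lt hi) le_rfl hmem
    simp only [if_pos h1, if_pos hmem]
    exact hi
  zeros' := by intro i j hij; exact if_neg hij

lemma rowTableau_apply (ν : Fin m → ℕ) (h : Antitone ν) (a b : ℕ) :
    rowTableau ν h a b = if (a, b) ∈ diagramOf ν h then a else 0 := rfl

lemma content_rowTableau (ν : Fin m → ℕ) (h : Antitone ν) (k : Fin m) :
    content (diagramOf ν h) (rowTableau ν h) (k : ℕ) = ν k := by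
  unfold content
  have hset : ((diagramOf ν h).cells.filter fun c => (rowTableau ν h) c.1 c.2 = (k : ℕ)) =
      (Finset.range (ν k)).image fun j => ((k : ℕ), j) := by
    ext c
    obtain ⟨a, b⟩ := c
    simp only [Finset.mem_filter, Finset.mem_image, Finset.mem_range, Prod.mk.injEq]
    constructor
    · rintro ⟨hc, he⟩
      have hm : (a, b) ∈ diagramOf ν h := hc
      rw [rowTableau_apply, if_pos hm] at he
      obtain ⟨i, rfl, hb⟩ := (mem_diagramOf ν h a b).mp hm
      have hik : i = k := Fin.ext he
      exact ⟨b, hik ▸ hb, he.symm, rfl⟩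
    · rintro ⟨b', hb', rfl, rfl⟩
      have hm : ((k : ℕ), b') ∈ diagramOf ν h := (mem_diagramOf ν h _ _).mpr ⟨k, rfl, hb'⟩
      exact ⟨hm, by rw [rowTableau_apply, if_pos hm]⟩
  rw [hset, Finset.card_image_of_injective _ (fun x y hxy => (Prod.mk.injEq _ _ _ _).mp hxy |>.2),
    Finset.card_range]

lemma schurCoeff_self_ne_zero (ν : Fin m → ℕ) (h : Antitone ν) :
    schurCoeff m (diagramOf ν h) ν ≠ 0 := by
  unfold schurCoeff
  rw [Nat.card_ne_zero]
  constructor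
  · refine ⟨⟨rowTableau ν h, ?_, fun k => content_rowTableau ν h k⟩⟩
    intro i j hij
    rw [rowTableau_apply, if_pos hij]
    obtain ⟨i', rfl, -⟩ := (mem_diagramOf ν h i j).mp hij
    exact i'.isLt
  · apply Finite.of_injective (fun T : {T : SemistandardYoungTableau (diagramOf ν h) //
        (∀ i j : ℕ, (i, j) ∈ diagramOf ν h → T i j < m) ∧
        ∀ k : Fin m, content (diagramOf ν h) T (k : ℕ) = ν k} =>
      fun c : (diagramOf ν h).cells =>
        (⟨T.1 c.1.1 c.1.2, T.2.1 c.1.1 c.1.2 ((YoungDiagram.mem_cells _).mp c.2)⟩ : Fin m))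
    intro T1 T2 heq
    apply Subtype.ext
    apply DFunLike.ext
    intro i
    funext j
    by_cases hij : (i, j) ∈ diagramOf ν h
    · have := congrFun heq ⟨(i, j), ((YoungDiagram.mem_cells _).mpr hij)⟩
      exact Fin.val_eq_of_eq this
    · rw [T1.1.zeros hij, T2.1.zeros hij]

end Aux

/-- In a northmost box-addition chain `α = lam 0 < … < lam l = β` of partitions, any `lam j`
(with `0 < j < l`) which is not of the form `(β₁,…,β_i,α_{i+1},…,α_m)` satisfies
`lam j = (lam (j-1) + lam (j+1)) / 2`, and hence is not a vertex of the convex hull of the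
union of the Newton polytopes of the `s_{lam i}`. -/
theorem middle_of_chain_not_vertex (m l : ℕ)
    (lam : ℕ → Fin m → ℕ) (hanti : ∀ i ≤ l, Antitone (lam i))
    (hstep : ∀ i < l, NorthmostStep (lam l) (lam i) (lam (i + 1)))
    (j : ℕ) (hj0 : 0 < j) (hjl : j < l)
    (hform : ¬ ∃ i ≤ m, lam j = fun k : Fin m => if (k : ℕ) < i then lam l k else lam 0 k) :
    (∀ k : Fin m, 2 * lam j k = lam (j - 1) k + lam (j + 1) k) ∧
    ¬ IsVertex
      (convexHull ℝ (⋃ i : {i : ℕ // i ≤ l},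
        NewtonP (schurR m (diagramOf (lam i.1) (hanti i.1 i.2)))))
      (fun k => (lam j k : ℝ)) := by
  -- the final-form map, used in `hform`
  have hcast : ∀ (i : ℕ) (_ : i ≤ m), True := fun _ _ => trivial
  have hmono := chain_mono l lam hstep
  have hQ := invQ l lam hanti hstep
  have hne0 : lam j ≠ lam 0 := by
    intro h
    exact hform ⟨0, Nat.zero_le m, by funext k; simp [h]⟩
  have hSne : ∃ k, lam j k ≠ lam 0 k := by
    by_contra h
    push_neg at h
    exact hne0 (funext h)
  have hS : (Finset.univ.filter (fun k => lam j k ≠ lam 0 k)).Nonempty := by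
    obtain ⟨k, hk⟩ := hSne
    exact ⟨k, by simp [hk]⟩
  obtain ⟨p, hp_mem, hp_max⟩ := Finset.exists_max_image _ id hS
  have hp_ne : lam j p ≠ lam 0 p := (Finset.mem_filter.mp hp_mem).2
  have hsuffix : ∀ k, p < k → lam j k = lam 0 k := by
    intro k hk
    by_contra h
    have : k ≤ p := hp_max k (by simp [h])
    exact absurd hk (not_lt.2 this)
  have hprefix : ∀ k, k < p → lam j k = lam l k :=
    fun k hk => hQ j (le_of_lt hjl) k p hk hp_ne
  have hjβ : lam j p ≠ lam l p := by
    intro h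
    apply hform
    refine ⟨(p : ℕ) + 1, by omega, ?_⟩
    funext k
    by_cases hk : (k : ℕ) < (p : ℕ) + 1
    · rw [if_pos hk]
      rcases lt_or_eq_of_le (Nat.lt_succ_iff.mp hk) with h1 | h1
      · exact hprefix k h1
      · have hkp : k = p := Fin.ext h1
        rw [hkp]; exact h
    · rw [if_neg hk]
      exact hsuffix k (by omega)
  have hlt1 : lam 0 p < lam j p :=
    lt_of_le_of_ne (hmono 0 j (Nat.zero_le j) (le_of_lt hjl) p) (Ne.symm hp_ne)
  have hlt2 : lam j p < lam l p :=
    lt_of_le_of_ne (hmono j l (le_of_lt hjl) le_rfl p) hjβ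
  obtain ⟨r, hr, hA, hB, hmin⟩ := hstep j hjl
  rw [Pi.le_def] at hB
  have hrp : r = p := by
    have hfull := prefix_full l lam hanti hstep j hjl r hmin
    have h1 : ¬ p < r := fun h => hjβ (hfull p h)
    have h2 : ¬ r < p := by
      intro h
      have e1 : lam j r = lam l r := hprefix r h
      have e2 := hB r
      rw [hr, addBoxAt_apply, if_pos rfl] at e2
      omega
    exact le_antisymm (not_lt.1 h1) (not_lt.1 h2)
  have hj1 : j - 1 + 1 = j := by omega
  obtain ⟨r', hr', hA', hB', hmin'⟩ := hstep (j - 1) (by omega)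
  rw [hj1] at hr'
  have hr'p : r' = p := by
    have h2 : ¬ p < r' := by
      intro h
      have e1 : lam j r' = lam (j - 1) r' + 1 := by
        rw [hr', addBoxAt_apply, if_pos rfl]
      have e2 : lam j r' = lam 0 r' := hsuffix r' h
      have e3 : lam 0 r' ≤ lam (j - 1) r' := hmono 0 (j - 1) (Nat.zero_le _) (by omega) r'
      omega
    have h1 : ¬ r' < p := by
      intro h
      have ep : lam (j - 1) p = lam j p := by
        rw [hr', addBoxAt_apply, if_neg (ne_of_gt h)]
      have hq : lam (j - 1) r' = lam l r' :=
        hQ (j - 1) (by omega) r' p h (by rw [ep]; exact hp_ne)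
      have e1 : lam j r' = lam (j - 1) r' + 1 := by
        rw [hr', addBoxAt_apply, if_pos rfl]
      have e4 : lam j r' ≤ lam l r' := hmono j l (le_of_lt hjl) le_rfl r'
      omega
    exact le_antisymm (not_lt.1 h2) (not_lt.1 h1)
  have part1 : ∀ k : Fin m, 2 * lam j k = lam (j - 1) k + lam (j + 1) k := by
    intro k
    have e1 : lam (j + 1) k = if k = p then lam j p + 1 else lam j k := by
      rw [hr, hrp, addBoxAt_apply]
    have e2 : lam j k = if k = p then lam (j - 1) p + 1 else lam (j - 1) k := by
      rw [hr', hr'p, addBoxAt_apply]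
    by_cases hk : k = p
    · subst hk
      rw [if_pos rfl] at e1 e2
      omega
    · rw [if_neg hk] at e1 e2
      omega
  refine ⟨part1, ?_⟩
  intro hV
  have hmem : ∀ (i : ℕ) (hi : i ≤ l), (fun k => (lam i k : ℝ)) ∈
      convexHull ℝ (⋃ i : {i : ℕ // i ≤ l},
        NewtonP (schurR m (diagramOf (lam i.1) (hanti i.1 i.2)))) := by
    intro i hi
    apply subset_convexHull
    apply Set.mem_iUnion.2
    refine ⟨⟨i, hi⟩, ?_⟩
    apply subset_convexHull
    refine ⟨lam i, ?_, rfl⟩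
    simp only [schurR, ne_eq, Nat.cast_eq_zero]
    exact schurCoeff_self_ne_zero (lam i) (hanti i hi)
  have hw := hmem (j - 1) (by omega)
  have hu := hmem (j + 1) (by omega)
  have heq : (fun k => (lam j k : ℝ)) =
      (1 / 2 : ℝ) • (fun k => (lam (j - 1) k : ℝ)) +
        (1 - 1 / 2 : ℝ) • (fun k => (lam (j + 1) k : ℝ)) := by
    funext k
    have h2k := part1 k
    have : (2 : ℝ) * (lam j k : ℝ) = (lam (j - 1) k : ℝ) + (lam (j + 1) k : ℝ) := by
      exact_mod_cast congrArg (fun n : ℕ => (n : ℝ)) h2k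
    simp only [Pi.add_apply, Pi.smul_apply, smul_eq_mul]
    linarith
  obtain ⟨hwv, -⟩ := hV.2 _ hw _ hu (1 / 2) (by norm_num) (by norm_num) heq
  have hwvp := congrFun hwv p
  have e2 : lam j p = lam (j - 1) p + 1 := by
    rw [hr', hr'p, addBoxAt_apply, if_pos rfl]
  have : lam (j - 1) p = lam j p := by exact_mod_cast hwvp
  omega
end

section
/- Let p be a point in R^m with nonnegative integer coordinates summing to n, and let p↓ denote the rearrangement of the coordinates of p into weakly decreasing order. If p lies in the convex hull of the S_m-orbit of a partition lambda of n, then p↓ is dominated by lambda. -/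
open Finset Pointwise

lemma le_orderEmb {k m : ℕ} (g : Fin k ↪o Fin m) : ∀ a (h : a < k), a ≤ (g ⟨a, h⟩ : ℕ) := by
  intro a
  induction a with
  | zero => intro h; exact Nat.zero_le _
  | succ a ih =>
    intro h
    have h' : a < k := Nat.lt_of_succ_lt h
    have h1 := ih h'
    have h2 : g ⟨a, h'⟩ < g ⟨a + 1, h⟩ := g.strictMono (by simp [Fin.lt_def])
    rw [Fin.lt_def] at h2
    omega

lemma sum_subset_le {m : ℕ} (lam : Fin m → ℕ) (hlam : Antitone lam) (S : Finset (Fin m))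
    (j : Fin m) (hcard : S.card ≤ (j : ℕ) + 1) :
    ∑ i ∈ S, lam i ≤ ∑ i ∈ Finset.univ.filter (· ≤ j), lam i := by
  have hkm : S.card ≤ m := by
    simpa using Finset.card_le_card (Finset.subset_univ S)
  set k := S.card with hk
  set g := S.orderEmbOfFin rfl with hg
  have hS : S = Finset.image (fun i => g i) Finset.univ := by
    apply Finset.coe_injective
    rw [Finset.coe_image, Finset.coe_univ, Set.image_univ]
    exact (Finset.range_orderEmbOfFin S rfl).symm
  have h1 : ∑ i ∈ S, lam i = ∑ i : Fin k, lam (g i) := by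
    rw [Finset.sum_congr hS (fun _ _ => rfl),
      Finset.sum_image (fun x _ y _ h => g.injective h)]
  rw [h1]
  calc ∑ i : Fin k, lam (g i)
      ≤ ∑ i : Fin k, lam ⟨(i : ℕ), lt_of_lt_of_le i.isLt hkm⟩ := by
        apply Finset.sum_le_sum
        intro i _
        apply hlam
        rw [Fin.le_def]
        exact le_orderEmb g i i.isLt
    _ = ∑ i ∈ Finset.image (fun i : Fin k => (⟨(i : ℕ), lt_of_lt_of_le i.isLt hkm⟩ : Fin m))
          Finset.univ, lam i := by
        rw [Finset.sum_image]
        intro x _ y _ h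
        exact Fin.ext (by simpa [Fin.ext_iff] using h)
    _ ≤ ∑ i ∈ Finset.univ.filter (· ≤ j), lam i := by
        apply Finset.sum_le_sum_of_subset
        intro x hx
        simp only [Finset.mem_image, Finset.mem_univ, true_and] at hx
        obtain ⟨i, hi⟩ := hx
        simp only [Finset.mem_filter, Finset.mem_univ, true_and]
        rw [← hi, Fin.le_def]
        have := i.isLt
        simp only
        omega

/-- If `p ∈ ℕ^m` has coordinate sum `n` and lies in the convex hull of the `S_m`-orbit of a
partition `λ` of `n`, then the decreasing rearrangement `p↓` is dominated by `λ`. -/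
theorem decreasing_rearrangement_dominated (m n : ℕ)
    (p : Fin m → ℕ) (hp : ∑ k, p k = n)
    (lam : Fin m → ℕ) (hlam : Antitone lam) (hsize : ∑ k, lam k = n)
    (hmem : (fun k => (p k : ℝ)) ∈ convexHull ℝ (orbitR lam)) :
    ∀ σ : Equiv.Perm (Fin m), Antitone (p ∘ σ) → Dominates (p ∘ σ) lam := by
  intro σ _hσ j
  set F := Finset.univ.filter (· ≤ j) with hF
  set C := ∑ i ∈ F, lam i with hC
  have hs : convexHull ℝ (orbitR lam) ⊆ {x : Fin m → ℝ | ∑ i ∈ F, x (σ i) ≤ (C : ℝ)} := by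
    apply convexHull_min
    · rintro x ⟨τ, rfl⟩
      simp only [Set.mem_setOf_eq]
      have hcast : ∑ i ∈ F, (lam (τ (σ i)) : ℝ) = ((∑ i ∈ F, lam (τ (σ i)) : ℕ) : ℝ) := by
        push_cast; rfl
      rw [hcast]
      apply Nat.cast_le.mpr
      have hsum : ∑ i ∈ F, lam (τ (σ i)) = ∑ i ∈ F.image (fun i => τ (σ i)), lam i :=
        (Finset.sum_image (fun x _ y _ h => σ.injective (τ.injective h))).symm
      rw [hsum]
      apply sum_subset_le lam hlam
      rw [Finset.card_image_of_injective _ (fun x y h => σ.injective (τ.injective h))]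
      have hFI : F = Finset.Iic j := by ext i; simp [hF]
      rw [hFI, Fin.card_Iic]
    · exact convex_halfSpace_le
        ⟨fun a b => by simp [Finset.sum_add_distrib],
         fun c x => by simp [Finset.mul_sum]⟩ _
  have hle := hs hmem
  simp only [Set.mem_setOf_eq] at hle
  exact_mod_cast hle
end
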